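/- Polynomial time property of safe programs: if p_φ is a safe program with respect to Γ and a safe Δ, then there is a (type-1) polynomial P such that for every store μ, every oracle φ and every derivation π_φ : μ ⊨ p_φ → w, the size |π_φ| of the derivation is at most P(m(μ,π_φ)), where m(μ,π_φ) is the maximum of |μ| and of the sizes of all oracle answers occurring in π_φ. -/

import Mathlib

namespace BFFpaper

/-! ### Words -/

/-- Words over the alphabet `{0,1}` (`false` = 0, `true` = 1). -/
abbrev W : Type := List Bool

/-- `padTrunc v w` truncates `v` to its first `min |v| |w|` symbols and pads the
result with a word of the form `10^k` so that the result has length `|w| + 1`. -/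
def padTrunc (v w : W) : W :=
  v.take w.length ++ true :: List.replicate (w.length - (v.take w.length).length) false

/-- Maximum of a list of naturals (0 for the empty list). -/
def maxList (l : List ℕ) : ℕ := l.foldr max 0

/-- `lrAux m l` counts the positions of `l` whose value strictly exceeds the
maximum of `m` and all previous values. -/
def lrAux : ℕ → List ℕ → ℕ
  | _, [] => 0
  | m, a :: l => if m < a then lrAux (max m a) l + 1 else lrAux m l

/-- Number of "lookahead revisions" in a sequence of oracle inputs: the number of
indices whose entry is strictly longer than all previous entries. -/
def lrCount (l : List W) : ℕ := lrAux 0 (l.map List.length)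

/-! ### Oracle Turing machines -/

/-- Tape symbols: `none` is the blank symbol. -/
abbrev Sym := Option Bool

/-- A (half-abstract) two-way infinite tape with a head: left part (reversed) and
right part, the head scanning the first symbol of the right part. -/
abbrev HTape := List Sym × List Sym

def tRead (t : HTape) : Sym := t.2.headD none

def tWrite (t : HTape) (s : Sym) : HTape := (t.1, s :: t.2.tail)

inductive Move | L | R | N
deriving DecidableEq

def tMove (t : HTape) : Move → HTape
  | .L => (t.1.tail, t.1.headD none :: t.2)
  | .R => (t.2.headD none :: t.1, t.2.tail)
  | .N => t

def tAct (t : HTape) (a : Sym × Move) : HTape := tMove (tWrite t a.1) a.2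

/-- The word written on a tape starting at the head (up to the first blank). -/
def tWord (t : HTape) : W := (t.2.takeWhile fun s => s.isSome).filterMap id

def ofWord (w : W) : HTape := ([], w.map some)

/-- A deterministic oracle Turing machine with `k` (unary, word-valued) oracles,
an input tape, a query tape, an answer tape and a work tape.  The transition
function reads the state and the four scanned symbols and either halts (`none`)
or produces a new state, a write/move action for each tape and an optional
oracle index: if an oracle index `i` is produced, the machine poses the content
of the query tape as a query and the oracle answer `φ i q` appears on the answer
tape in this single step. -/
structure OTM (k : ℕ) where
  states : ℕ
  q₀ : Fin (states + 1)
  δ : Fin (states + 1) → Sym × Sym × Sym × Sym →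
      Option (Fin (states + 1) × (Sym × Move) × (Sym × Move) × (Sym × Move) × (Sym × Move) ×
        Option (Fin k))

/-- Configurations of an oracle Turing machine. -/
structure Cfg (k : ℕ) (M : OTM k) where
  q : Fin (M.states + 1)
  inp : HTape
  qry : HTape
  ans : HTape
  wrk : HTape

namespace OTM

variable {k : ℕ}

def reads (M : OTM k) (c : Cfg k M) : Sym × Sym × Sym × Sym :=
  (tRead c.inp, tRead c.qry, tRead c.ans, tRead c.wrk)

/-- One step of the machine (`none` when the machine halts). -/
def step (M : OTM k) (φ : Fin k → W → W) (c : Cfg k M) : Option (Cfg k M) :=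
  match M.δ c.q (M.reads c) with
  | none => none
  | some (q', ai, aq, aa, aw, oq) =>
    let qry' := tAct c.qry aq
    some { q := q', inp := tAct c.inp ai, qry := qry',
           ans := match oq with
                  | none => tAct c.ans aa
                  | some i => ofWord (φ i (tWord qry'))
           wrk := tAct c.wrk aw }

/-- Running the machine for `n` steps (`none` if the machine halts earlier). -/
def run (M : OTM k) (φ : Fin k → W → W) : ℕ → Cfg k M → Option (Cfg k M)
  | 0, c => some c
  | n + 1, c => (M.step φ c).bind (M.run φ n)

/-- The (oracle index, query word) posed by the present step, if it is a query step. -/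
def stepQuery (M : OTM k) (c : Cfg k M) : List (Fin k × W) :=
  match M.δ c.q (M.reads c) with
  | some (_, _, aq, _, _, some i) => [(i, tWord (tAct c.qry aq))]
  | _ => []

/-- The list of queries posed during the first `n` steps of the run from `c`,
in chronological order. -/
def queries (M : OTM k) (φ : Fin k → W → W) : ℕ → Cfg k M → List (Fin k × W)
  | 0, _ => []
  | n + 1, c =>
    M.stepQuery c ++ (match M.step φ c with
      | none => []
      | some c' => M.queries φ n c')

/-- Initial configuration on a list of input words (separated by blanks on the
input tape). -/
def init (M : OTM k) (a : List W) : Cfg k M :=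
  { q := M.q₀, inp := ([], List.intercalate [none] (a.map fun w => w.map some)),
    qry := ([], []), ans := ([], []), wrk := ([], []) }

/-- The machine, with oracles `φ`, halts after exactly `n` steps from `c₀` in
configuration `c'`. -/
def HaltsAt (M : OTM k) (φ : Fin k → W → W) (c₀ : Cfg k M) (n : ℕ) (c' : Cfg k M) : Prop :=
  M.run φ n c₀ = some c' ∧ M.step φ c' = none

/-- The machine computes the type-2 functional `F` (output read off the work tape). -/
def Computes {m : ℕ} (M : OTM k) (F : (Fin k → W → W) → (Fin m → W) → W) : Prop :=
  ∀ (φ : Fin k → W → W) (v : Fin m → W),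
    ∃ n c', M.HaltsAt φ (M.init (List.ofFn v)) n c' ∧ tWord c'.wrk = F φ v

/-- Polynomial step count: the running time is bounded by a (type-1) polynomial in
the maximum of the input size and the sizes of all oracle answers during the run. -/
def PolyStepCount (M : OTM k) : Prop :=
  ∃ P : Polynomial ℕ, ∀ (φ : Fin k → W → W) (a : List W) (n : ℕ) (c' : Cfg k M),
    M.HaltsAt φ (M.init a) n c' →
      n ≤ P.eval (max (maxList (a.map List.length))
        (maxList ((M.queries φ n (M.init a)).map fun iw => (φ iw.1 iw.2).length)))

/-- Finite lookahead revision: on any oracle and any input, it happens at most `r`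
times that a query is posed whose size exceeds the sizes of all previous queries. -/
def FiniteLookahead (M : OTM k) : Prop :=
  ∃ r : ℕ, ∀ (φ : Fin k → W → W) (a : List W) (n : ℕ),
    lrAux 0 ((M.queries φ n (M.init a)).map fun iw => iw.2.length) ≤ r

end OTM

/-! ### Second-order polynomials and the basic feasible functionals -/

/-- Second-order polynomials in `k` length-functions and `m` first-order variables. -/
inductive SOP (k m : ℕ)
  | var : Fin m → SOP k m
  | const : ℕ → SOP k m
  | add : SOP k m → SOP k m → SOP k m
  | mul : SOP k m → SOP k m → SOP k m
  | app : Fin k → SOP k m → SOP k m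

def SOP.eval {k m : ℕ} (L : Fin k → ℕ → ℕ) (v : Fin m → ℕ) : SOP k m → ℕ
  | .var i => v i
  | .const c => c
  | .add p q => p.eval L v + q.eval L v
  | .mul p q => p.eval L v * q.eval L v
  | .app i p => L i (p.eval L v)

/-- The length function `|φ|` of an oracle: `|φ|(n)` is the maximal size of `φ w`
over words `w` of length at most `n`. -/
noncomputable def lenFun (φ : W → W) (n : ℕ) : ℕ :=
  sSup ((fun w => (φ w).length) '' { w : W | w.length ≤ n })

/-- Kapron–Cook style basic feasible functionals with `k` oracles and `m` word
arguments: computable by an oracle Turing machine whose running time is bounded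
by a second-order polynomial in the lengths `|φᵢ|` of the oracles and the sizes of
the inputs. -/
def BFFkm (k m : ℕ) : Set ((Fin k → W → W) → (Fin m → W) → W) :=
  { F | ∃ M : OTM k, M.Computes F ∧ ∃ P : SOP k m,
      ∀ (φ : Fin k → W → W) (v : Fin m → W) (n : ℕ) (c' : Cfg k M),
        M.HaltsAt φ (M.init (List.ofFn v)) n c' →
          n ≤ P.eval (fun i => lenFun (φ i)) (fun j => (v j).length) }

/-- The class `FP` of `m`-ary polynomial time computable (type-1) functions. -/
def FPm (m : ℕ) : Set ((Fin m → W) → W) :=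
  { F | ∃ M : OTM 0, M.Computes (fun _ v => F v) ∧ ∃ P : SOP 0 m,
      ∀ (φ : Fin 0 → W → W) (v : Fin m → W) (n : ℕ) (c' : Cfg 0 M),
        M.HaltsAt φ (M.init (List.ofFn v)) n c' →
          n ≤ P.eval (fun i => i.elim0) (fun j => (v j).length) }

/-- Moderately polynomial time functionals with `m` word arguments: computable by
an oracle machine with polynomial step count and finite lookahead revision. -/
def MPTm (m : ℕ) : Set ((W → W) → (Fin m → W) → W) :=
  { F | ∃ M : OTM 1, M.Computes (fun φs v => F (φs 0) v) ∧
      M.PolyStepCount ∧ M.FiniteLookahead }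

/-- The class MPT of type-2 functionals `(W → W) → W → W`. -/
def MPT : Set ((W → W) → W → W) := { F | (fun φ v => F φ (v 0)) ∈ MPTm 1 }

/-! ### Simple types, lambda terms and lambda closures -/

/-- Simple types over the base type of words. -/
inductive Ty
  | base : Ty
  | arrow : Ty → Ty → Ty

/-- Set-theoretic interpretation of simple types. -/
def Ty.interp : Ty → Type
  | .base => W
  | .arrow a b => a.interp → b.interp

/-- Type level. -/
def Ty.lev : Ty → ℕ
  | .base => 0
  | .arrow a b => max (a.lev + 1) b.lev

/-- A class of functionals: a set of functionals at each simple type. -/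
abbrev FClass := ∀ τ : Ty, Set τ.interp

/-- Simply typed lambda terms with constants from the class `X`. -/
inductive Tm (X : FClass) : List Ty → Ty → Type
  | var : ∀ {Γ : List Ty} (i : Fin Γ.length), Tm X Γ (Γ.get i)
  | con : ∀ {Γ : List Ty} {τ : Ty} (f : τ.interp), f ∈ X τ → Tm X Γ τ
  | lam : ∀ {Γ : List Ty} {σ τ : Ty}, Tm X (σ :: Γ) τ → Tm X Γ (.arrow σ τ)
  | app : ∀ {Γ : List Ty} {σ τ : Ty}, Tm X Γ (.arrow σ τ) → Tm X Γ σ → Tm X Γ τ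

/-- Denotational semantics of lambda terms. -/
def Tm.denote {X : FClass} : ∀ {Γ : List Ty} {τ : Ty},
    Tm X Γ τ → ((i : Fin Γ.length) → (Γ.get i).interp) → τ.interp
  | _, _, .var i, env => env i
  | _, _, .con f _, _ => f
  | Γ, _, .lam (σ := σ) t, env => fun a =>
      t.denote (fun i => Fin.cases (motive := fun i => (((σ :: Γ).get i)).interp) a env i)
  | _, _, .app t s, env => (t.denote env) (s.denote env)

/-- The simply typed lambda closure `λ(X)` of a class of functionals. -/
def lambdaCl (X : FClass) : FClass := fun τ =>
  { f | ∃ t : Tm X [] τ, t.denote (fun i => i.elim0) = f }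

/-- Restriction of a class to functionals of type level 2. -/
def levelTwo (X : FClass) : FClass := fun τ => { f | τ.lev = 2 ∧ f ∈ X τ }

/-- `λ(X)₂`: the type-2 restriction of the simply typed lambda closure of `X`. -/
def lambdaTwo (X : FClass) : FClass := levelTwo (lambdaCl X)

/-- The simple type `W → ⋯ → W → W` with `m` word arguments. -/
def tyW1 : ℕ → Ty
  | 0 => .base
  | m + 1 => .arrow .base (tyW1 m)

/-- The simple type `(W → W) → ⋯ → (W → W) → W → ⋯ → W → W` with `k` oracle
arguments and `m` word arguments. -/
def tyKM : ℕ → ℕ → Ty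
  | 0, m => tyW1 m
  | k + 1, m => .arrow (.arrow .base .base) (tyKM k m)

def curryW : ∀ m : ℕ, ((Fin m → W) → W) → (tyW1 m).interp
  | 0, F => F Fin.elim0
  | m + 1, F => fun a => curryW m (fun v => F (Fin.cons a v))

def curryKM : ∀ k m : ℕ, ((Fin k → W → W) → (Fin m → W) → W) → (tyKM k m).interp
  | 0, m, F => curryW m (F Fin.elim0)
  | k + 1, m, F => fun φ => curryKM k m (fun φs => F (Fin.cons φ φs))

/-- The class of functionals (at all simple types) obtained from a family of
multi-ary functionals by currying. -/
def classKM (S : ∀ k m : ℕ, Set ((Fin k → W → W) → (Fin m → W) → W)) : FClass :=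
  fun _τ f => ∃ k m F, F ∈ S k m ∧ HEq f (curryKM k m F)

/-- The class `BFF₂` of type-2 basic feasible functionals, at all level-2 types. -/
def BFF2 : FClass := lambdaTwo (classKM BFFkm)

/-! ### The imperative language with oracles -/

/-- A signature: a set of operators with arities and total word semantics. -/
structure Sig where
  Op : Type
  ar : Op → ℕ
  sem : ∀ o : Op, (Fin (ar o) → W) → W

/-- Expressions. -/
inductive Expr (S : Sig)
  | var : ℕ → Expr S
  | op : (o : S.Op) → (Fin (S.ar o) → Expr S) → Expr S
  | orac : Expr S → Expr S → Expr S

/-- Commands. -/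
inductive Cmd (S : Sig)
  | skip : Cmd S
  | assign : ℕ → Expr S → Cmd S
  | seq : Cmd S → Cmd S → Cmd S
  | ite : Expr S → Cmd S → Cmd S → Cmd S
  | wh : Expr S → Cmd S → Cmd S

/-- Programs: a command together with a return variable. -/
structure Prog (S : Sig) where
  cmd : Cmd S
  ret : ℕ

variable {S : Sig}

/-- Evaluation of expressions (stores are total maps from variables to words). -/
def evalE (S : Sig) (φ : W → W) (μ : ℕ → W) : Expr S → W
  | .var x => μ x
  | .op o a => S.sem o (fun i => evalE S φ μ (a i))
  | .orac e₁ e₂ => φ (padTrunc (evalE S φ μ e₁) (evalE S φ μ e₂))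

/-- Size (number of nodes) of the evaluation derivation of an expression. -/
def sizeE : Expr S → ℕ
  | .var _ => 1
  | .op _ a => 1 + ∑ i, sizeE (a i)
  | .orac e₁ e₂ => 1 + sizeE e₁ + sizeE e₂

/-- The sequence of oracle input values occurring in the evaluation of an
expression, in left-to-right order. -/
def queriesE (S : Sig) (φ : W → W) (μ : ℕ → W) : Expr S → List W
  | .var _ => []
  | .op _ a => (List.ofFn fun i => queriesE S φ μ (a i)).flatten
  | .orac e₁ e₂ => queriesE S φ μ e₁ ++ queriesE S φ μ e₂ ++
      [padTrunc (evalE S φ μ e₁) (evalE S φ μ e₂)]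

/-- Big-step operational semantics of commands, instrumented with the size of
the derivation and the chronological list of oracle input values. -/
inductive EvalC (S : Sig) (φ : W → W) : Cmd S → (ℕ → W) → (ℕ → W) → ℕ → List W → Prop
  | skip {μ} : EvalC S φ .skip μ μ 1 []
  | assign {μ x e} :
      EvalC S φ (.assign x e) μ (Function.update μ x (evalE S φ μ e)) (sizeE e + 1)
        (queriesE S φ μ e)
  | seq {c₁ c₂ μ μ₁ μ₂ n₁ n₂ q₁ q₂} :
      EvalC S φ c₁ μ μ₁ n₁ q₁ → EvalC S φ c₂ μ₁ μ₂ n₂ q₂ →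
      EvalC S φ (.seq c₁ c₂) μ μ₂ (n₁ + n₂ + 1) (q₁ ++ q₂)
  | ifT {e c₁ c₀ μ μ' n q} :
      evalE S φ μ e = [true] → EvalC S φ c₁ μ μ' n q →
      EvalC S φ (.ite e c₁ c₀) μ μ' (sizeE e + n + 1) (queriesE S φ μ e ++ q)
  | ifF {e c₁ c₀ μ μ' n q} :
      evalE S φ μ e = [false] → EvalC S φ c₀ μ μ' n q →
      EvalC S φ (.ite e c₁ c₀) μ μ' (sizeE e + n + 1) (queriesE S φ μ e ++ q)
  | whF {e c μ} :
      evalE S φ μ e = [false] →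
      EvalC S φ (.wh e c) μ μ (sizeE e + 1) (queriesE S φ μ e)
  | whT {e c μ μ₁ μ₂ n₁ n₂ q₁ q₂} :
      evalE S φ μ e = [true] → EvalC S φ c μ μ₁ n₁ q₁ →
      EvalC S φ (.wh e c) μ₁ μ₂ n₂ q₂ →
      EvalC S φ (.wh e c) μ μ₂ (sizeE e + n₁ + n₂ + 1) (queriesE S φ μ e ++ q₁ ++ q₂)

/-! ### Syntactic notions -/

/-- Variables of an expression. -/
def varsE : Expr S → Finset ℕ
  | .var x => {x}
  | .op _ a => Finset.univ.biUnion fun i => varsE (a i)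
  | .orac e₁ e₂ => varsE e₁ ∪ varsE e₂

/-- Variables of a command. -/
def varsC : Cmd S → Finset ℕ
  | .skip => ∅
  | .assign x e => insert x (varsE e)
  | .seq c₁ c₂ => varsC c₁ ∪ varsC c₂
  | .ite e c₁ c₂ => varsE e ∪ varsC c₁ ∪ varsC c₂
  | .wh e c => varsE e ∪ varsC c

/-- Variables assigned to in a command. -/
def AssignedIn (x : ℕ) : Cmd S → Prop
  | .skip => False
  | .assign y _ => x = y
  | .seq c₁ c₂ => AssignedIn x c₁ ∨ AssignedIn x c₂
  | .ite _ c₁ c₂ => AssignedIn x c₁ ∨ AssignedIn x c₂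
  | .wh _ c => AssignedIn x c

/-- Subexpression occurrence. -/
inductive SubExpr : Expr S → Expr S → Prop
  | refl (e : Expr S) : SubExpr e e
  | op {e : Expr S} {o : S.Op} {a : Fin (S.ar o) → Expr S} (i : Fin (S.ar o)) :
      SubExpr e (a i) → SubExpr e (.op o a)
  | oracL {e e₁ e₂ : Expr S} : SubExpr e e₁ → SubExpr e (.orac e₁ e₂)
  | oracR {e e₁ e₂ : Expr S} : SubExpr e e₂ → SubExpr e (.orac e₁ e₂)

/-- Occurrence of an expression in a command. -/
inductive ExprInCmd : Expr S → Cmd S → Prop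
  | assign {e e' : Expr S} {x : ℕ} : SubExpr e e' → ExprInCmd e (.assign x e')
  | seqL {e c₁ c₂} : ExprInCmd e c₁ → ExprInCmd e (.seq c₁ c₂)
  | seqR {e c₁ c₂} : ExprInCmd e c₂ → ExprInCmd e (.seq c₁ c₂)
  | iteG {e e' c₁ c₂} : SubExpr e e' → ExprInCmd e (.ite e' c₁ c₂)
  | iteL {e e' c₁ c₂} : ExprInCmd e c₁ → ExprInCmd e (.ite e' c₁ c₂)
  | iteR {e e' c₁ c₂} : ExprInCmd e c₂ → ExprInCmd e (.ite e' c₁ c₂)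
  | whG {e e' c} : SubExpr e e' → ExprInCmd e (.wh e' c)
  | whB {e e' c} : ExprInCmd e c → ExprInCmd e (.wh e' c)

/-- Occurrence of a command in a command. -/
inductive CmdInCmd : Cmd S → Cmd S → Prop
  | refl (c : Cmd S) : CmdInCmd c c
  | seqL {c c₁ c₂} : CmdInCmd c c₁ → CmdInCmd c (.seq c₁ c₂)
  | seqR {c c₁ c₂} : CmdInCmd c c₂ → CmdInCmd c (.seq c₁ c₂)
  | iteL {c e c₁ c₂} : CmdInCmd c c₁ → CmdInCmd c (.ite e c₁ c₂)
  | iteR {c e c₁ c₂} : CmdInCmd c c₂ → CmdInCmd c (.ite e c₁ c₂)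
  | whB {c e c'} : CmdInCmd c c' → CmdInCmd c (.wh e c')

/-- All operators occurring in an expression are neutral (w.r.t. predicate `N`). -/
def OpsSat (N : S.Op → Prop) : Expr S → Prop
  | .var _ => True
  | .op o a => N o ∧ ∀ i, OpsSat N (a i)
  | .orac e₁ e₂ => OpsSat N e₁ ∧ OpsSat N e₂

/-- No oracle call occurs in the expression. -/
def OracleFreeE : Expr S → Prop
  | .var _ => True
  | .op _ a => ∀ i, OracleFreeE (a i)
  | .orac _ _ => False

/-- No oracle call occurs in the command. -/
def OracleFreeC : Cmd S → Prop
  | .skip => True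
  | .assign _ e => OracleFreeE e
  | .seq c₁ c₂ => OracleFreeC c₁ ∧ OracleFreeC c₂
  | .ite e c₁ c₂ => OracleFreeE e ∧ OracleFreeC c₁ ∧ OracleFreeC c₂
  | .wh e c => OracleFreeE e ∧ OracleFreeC c

/-! ### Neutral and positive operators, safe environments -/

/-- Neutral operators: constants, predicates, or operators computing a subword
of one of their arguments. -/
def Sig.Neutral (S : Sig) (o : S.Op) : Prop :=
  S.ar o = 0 ∨ (∀ v, S.sem o v = [false] ∨ S.sem o v = [true]) ∨
    (∀ v, ∃ i, S.sem o v <:+: v i)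

/-- Positive operators: the size of the output is bounded by the maximal size of
the arguments plus a constant. -/
def Sig.Positive (S : Sig) (o : S.Op) : Prop :=
  ∃ c : ℕ, ∀ v, (S.sem o v).length ≤ (Finset.univ.sup fun i => (v i).length) + c

/-- The semantics of the operator is polynomial time computable. -/
def Sig.PolyTimeOp (S : Sig) (o : S.Op) : Prop :=
  (fun v => S.sem o v) ∈ FPm (S.ar o)

/-- Operator typing environments: to each operator and each innermost tier, a set
of admissible operator types `t₁ → ⋯ → t_{ar op} → t`. -/
abbrev OpEnv (S : Sig) := ∀ o : S.Op, ℕ → Set ((Fin (S.ar o) → ℕ) × ℕ)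

/-- Safe operator typing environments. -/
def SafeDelta (S : Sig) (Δ : OpEnv S) : Prop :=
  ∀ (o : S.Op) (tin : ℕ) (tv : Fin (S.ar o) → ℕ) (t : ℕ), (tv, t) ∈ Δ o tin →
    (0 < S.ar o → (S.Neutral o ∨ S.Positive o) ∧ S.PolyTimeOp o) ∧
    (∀ i, t ≤ tv i) ∧ (∀ i, tv i ≤ tin) ∧ t ≤ tin ∧
    (S.Positive o ∧ ¬ S.Neutral o → t < tin)

/-! ### The tier-based type system -/

/-- Typing judgments for expressions: `TE S Γ Δ e t ti to`. -/
inductive TE (S : Sig) (Γ : ℕ → ℕ) (Δ : OpEnv S) : Expr S → ℕ → ℕ → ℕ → Prop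
  | var {x tin tout} : TE S Γ Δ (.var x) (Γ x) tin tout
  | op {o : S.Op} {a tv t tin tout} : (tv, t) ∈ Δ o tin →
      (∀ i, TE S Γ Δ (a i) (tv i) tin tout) → TE S Γ Δ (.op o a) t tin tout
  | orac {e₁ e₂ t tin tout} : TE S Γ Δ e₁ t tin tout → TE S Γ Δ e₂ tout tin tout →
      t < tin → t ≤ tout → TE S Γ Δ (.orac e₁ e₂) t tin tout

/-- Typing judgments for commands: `TC S Γ Δ c t ti to`. -/
inductive TC (S : Sig) (Γ : ℕ → ℕ) (Δ : OpEnv S) : Cmd S → ℕ → ℕ → ℕ → Prop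
  | sub {c t tin tout} : TC S Γ Δ c t tin tout → TC S Γ Δ c (t + 1) tin tout
  | skip {tin tout} : TC S Γ Δ .skip 0 tin tout
  | assign {x e t' tin tout} : TE S Γ Δ e t' tin tout → Γ x ≤ t' →
      TC S Γ Δ (.assign x e) (Γ x) tin tout
  | seq {c₁ c₂ t tin tout} : TC S Γ Δ c₁ t tin tout → TC S Γ Δ c₂ t tin tout →
      TC S Γ Δ (.seq c₁ c₂) t tin tout
  | ite {e c₁ c₂ t tin tout} : TE S Γ Δ e t tin tout → TC S Γ Δ c₁ t tin tout →
      TC S Γ Δ c₂ t tin tout → TC S Γ Δ (.ite e c₁ c₂) t tin tout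
  | whW {e c t tin tout} : TE S Γ Δ e t tin tout → TC S Γ Δ c t t tout →
      1 ≤ t → t ≤ tout → TC S Γ Δ (.wh e c) t tin tout
  | wh0 {e c t tin} : TE S Γ Δ e t tin t → TC S Γ Δ c t t t →
      1 ≤ t → TC S Γ Δ (.wh e c) t tin 0

/-! ### Typing derivations as trees -/

mutual
/-- Typing derivation trees for expressions. -/
inductive DE (S : Sig) (Γ : ℕ → ℕ) (Δ : OpEnv S) : Expr S → ℕ → ℕ → ℕ → Type
  | var (x tin tout : ℕ) : DE S Γ Δ (.var x) (Γ x) tin tout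
  | op {o : S.Op} {a tv t tin tout} : (tv, t) ∈ Δ o tin →
      (∀ i, DE S Γ Δ (a i) (tv i) tin tout) → DE S Γ Δ (.op o a) t tin tout
  | orac {e₁ e₂ t tin tout} : DE S Γ Δ e₁ t tin tout → DE S Γ Δ e₂ tout tin tout →
      t < tin → t ≤ tout → DE S Γ Δ (.orac e₁ e₂) t tin tout

/-- Typing derivation trees for commands. -/
inductive DC (S : Sig) (Γ : ℕ → ℕ) (Δ : OpEnv S) : Cmd S → ℕ → ℕ → ℕ → Type
  | sub {c t tin tout} : DC S Γ Δ c t tin tout → DC S Γ Δ c (t + 1) tin tout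
  | skip (tin tout : ℕ) : DC S Γ Δ .skip 0 tin tout
  | assign {x e t' tin tout} : DE S Γ Δ e t' tin tout → Γ x ≤ t' →
      DC S Γ Δ (.assign x e) (Γ x) tin tout
  | seq {c₁ c₂ t tin tout} : DC S Γ Δ c₁ t tin tout → DC S Γ Δ c₂ t tin tout →
      DC S Γ Δ (.seq c₁ c₂) t tin tout
  | ite {e c₁ c₂ t tin tout} : DE S Γ Δ e t tin tout → DC S Γ Δ c₁ t tin tout →
      DC S Γ Δ c₂ t tin tout → DC S Γ Δ (.ite e c₁ c₂) t tin tout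
  | whW {e c t tin tout} : DE S Γ Δ e t tin tout → DC S Γ Δ c t t tout →
      1 ≤ t → t ≤ tout → DC S Γ Δ (.wh e c) t tin tout
  | wh0 {e c t tin} : DE S Γ Δ e t tin t → DC S Γ Δ c t t t →
      1 ≤ t → DC S Γ Δ (.wh e c) t tin 0
end

/-- `SubC ρ ρ'`: the command typing derivation `ρ` is a subderivation (subtree) of
`ρ'`, i.e. `ρ ∈ D(ρ')`. -/
inductive SubC {S : Sig} {Γ : ℕ → ℕ} {Δ : OpEnv S} :
    ∀ {c₁ t₁ i₁ o₁ c₂ t₂ i₂ o₂}, DC S Γ Δ c₁ t₁ i₁ o₁ → DC S Γ Δ c₂ t₂ i₂ o₂ → Prop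
  | refl {c t tin tout} (ρ : DC S Γ Δ c t tin tout) : SubC ρ ρ
  | sub {c₁ t₁ i₁ o₁ c t tin tout} {ρ : DC S Γ Δ c₁ t₁ i₁ o₁} {ρ' : DC S Γ Δ c t tin tout} :
      SubC ρ ρ' → SubC ρ (DC.sub ρ')
  | seqL {c₁ t₁ i₁ o₁ ca cb t tin tout} {ρ : DC S Γ Δ c₁ t₁ i₁ o₁}
      {ρa : DC S Γ Δ ca t tin tout} {ρb : DC S Γ Δ cb t tin tout} :
      SubC ρ ρa → SubC ρ (DC.seq ρa ρb)
  | seqR {c₁ t₁ i₁ o₁ ca cb t tin tout} {ρ : DC S Γ Δ c₁ t₁ i₁ o₁}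
      {ρa : DC S Γ Δ ca t tin tout} {ρb : DC S Γ Δ cb t tin tout} :
      SubC ρ ρb → SubC ρ (DC.seq ρa ρb)
  | iteL {c₁ t₁ i₁ o₁ e ca cb t tin tout} {ρ : DC S Γ Δ c₁ t₁ i₁ o₁}
      {ρe : DE S Γ Δ e t tin tout} {ρa : DC S Γ Δ ca t tin tout} {ρb : DC S Γ Δ cb t tin tout} :
      SubC ρ ρa → SubC ρ (DC.ite ρe ρa ρb)
  | iteR {c₁ t₁ i₁ o₁ e ca cb t tin tout} {ρ : DC S Γ Δ c₁ t₁ i₁ o₁}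
      {ρe : DE S Γ Δ e t tin tout} {ρa : DC S Γ Δ ca t tin tout} {ρb : DC S Γ Δ cb t tin tout} :
      SubC ρ ρa → SubC ρ (DC.ite ρe ρb ρa)
  | whW {c₁ t₁ i₁ o₁ e c t tin tout} {ρ : DC S Γ Δ c₁ t₁ i₁ o₁}
      {ρe : DE S Γ Δ e t tin tout} {ρc : DC S Γ Δ c t t tout} {h₁ : 1 ≤ t} {h₂ : t ≤ tout} :
      SubC ρ ρc → SubC ρ (DC.whW ρe ρc h₁ h₂)
  | wh0 {c₁ t₁ i₁ o₁ e c t tin} {ρ : DC S Γ Δ c₁ t₁ i₁ o₁}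
      {ρe : DE S Γ Δ e t tin t} {ρc : DC S Γ Δ c t t t} {h₁ : 1 ≤ t} :
      SubC ρ ρc → SubC ρ (DC.wh0 ρe ρc h₁)

/-- `SSubC ρ ρ'`: `ρ` is a *strict* subderivation of `ρ'`, i.e. `ρ ∈ D̊(ρ')`. -/
inductive SSubC {S : Sig} {Γ : ℕ → ℕ} {Δ : OpEnv S} :
    ∀ {c₁ t₁ i₁ o₁ c₂ t₂ i₂ o₂}, DC S Γ Δ c₁ t₁ i₁ o₁ → DC S Γ Δ c₂ t₂ i₂ o₂ → Prop
  | sub {c₁ t₁ i₁ o₁ c t tin tout} {ρ : DC S Γ Δ c₁ t₁ i₁ o₁} {ρ' : DC S Γ Δ c t tin tout} :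
      SubC ρ ρ' → SSubC ρ (DC.sub ρ')
  | seqL {c₁ t₁ i₁ o₁ ca cb t tin tout} {ρ : DC S Γ Δ c₁ t₁ i₁ o₁}
      {ρa : DC S Γ Δ ca t tin tout} {ρb : DC S Γ Δ cb t tin tout} :
      SubC ρ ρa → SSubC ρ (DC.seq ρa ρb)
  | seqR {c₁ t₁ i₁ o₁ ca cb t tin tout} {ρ : DC S Γ Δ c₁ t₁ i₁ o₁}
      {ρa : DC S Γ Δ ca t tin tout} {ρb : DC S Γ Δ cb t tin tout} :
      SubC ρ ρb → SSubC ρ (DC.seq ρa ρb)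
  | iteL {c₁ t₁ i₁ o₁ e ca cb t tin tout} {ρ : DC S Γ Δ c₁ t₁ i₁ o₁}
      {ρe : DE S Γ Δ e t tin tout} {ρa : DC S Γ Δ ca t tin tout} {ρb : DC S Γ Δ cb t tin tout} :
      SubC ρ ρa → SSubC ρ (DC.ite ρe ρa ρb)
  | iteR {c₁ t₁ i₁ o₁ e ca cb t tin tout} {ρ : DC S Γ Δ c₁ t₁ i₁ o₁}
      {ρe : DE S Γ Δ e t tin tout} {ρa : DC S Γ Δ ca t tin tout} {ρb : DC S Γ Δ cb t tin tout} :
      SubC ρ ρa → SSubC ρ (DC.ite ρe ρb ρa)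
  | whW {c₁ t₁ i₁ o₁ e c t tin tout} {ρ : DC S Γ Δ c₁ t₁ i₁ o₁}
      {ρe : DE S Γ Δ e t tin tout} {ρc : DC S Γ Δ c t t tout} {h₁ : 1 ≤ t} {h₂ : t ≤ tout} :
      SubC ρ ρc → SSubC ρ (DC.whW ρe ρc h₁ h₂)
  | wh0 {c₁ t₁ i₁ o₁ e c t tin} {ρ : DC S Γ Δ c₁ t₁ i₁ o₁}
      {ρe : DE S Γ Δ e t tin t} {ρc : DC S Γ Δ c t t t} {h₁ : 1 ≤ t} :
      SubC ρ ρc → SSubC ρ (DC.wh0 ρe ρc h₁)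

/-- The last rule of a command typing derivation is (W) or (W₀). -/
def DC.lastWhileIntro {S : Sig} {Γ : ℕ → ℕ} {Δ : OpEnv S} :
    ∀ {c t tin tout}, DC S Γ Δ c t tin tout → Prop
  | _, _, _, _, .whW _ _ _ _ => True
  | _, _, _, _, .wh0 _ _ _ => True
  | _, _, _, _, _ => False

/-! ### Safe programs, ST and the computed functionals -/

/-- A program is safe with respect to `Γ` and a safe `Δ` when its command is typable. -/
def SafeProg (S : Sig) (Γ : ℕ → ℕ) (Δ : OpEnv S) (p : Prog S) : Prop :=
  SafeDelta S Δ ∧ ∃ t tin tout, TC S Γ Δ p.cmd t tin tout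

def Prog.vars (p : Prog S) : Finset ℕ := varsC p.cmd ∪ {p.ret}

def Prog.varList (p : Prog S) : List ℕ := p.vars.sort (· ≤ ·)

/-- The number of input arguments of a program: one for each of its variables. -/
def Prog.arity (p : Prog S) : ℕ := p.varList.length

/-- The initial store associated with input values `v` (all other variables are ε). -/
def Prog.initStore (p : Prog S) (v : Fin p.arity → W) : ℕ → W := fun x =>
  if h : x ∈ p.varList then v ⟨p.varList.idxOf x, List.idxOf_lt_length_iff.mpr h⟩ else []

/-- `p.EvalP φ v w` : on oracle `φ` and inputs `v`, the program `p` terminates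
with result `w`. -/
def Prog.EvalP (p : Prog S) (φ : W → W) (v : Fin p.arity → W) (w : W) : Prop :=
  ∃ μ' n q, EvalC S φ p.cmd (p.initStore v) μ' n q ∧ w = μ' p.ret

/-- Termination on all oracles and inputs. -/
def Prog.Terminating (p : Prog S) : Prop := ∀ φ v, ∃ w, p.EvalP φ v w

open Classical in
/-- The (second-order) function computed by the program. -/
noncomputable def Prog.fn (p : Prog S) (φ : W → W) (v : Fin p.arity → W) : W :=
  if h : ∃ w, p.EvalP φ v w then h.choose else []

/-- `ST`: the safe and terminating programs. -/
def STset (S : Sig) : Set (Prog S) :=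
  { p | (∃ Γ Δ, SafeProg S Γ Δ p) ∧ p.Terminating }

/-- The `n`-ary type-2 functionals computed by programs in `ST`. -/
def STsemN (S : Sig) (n : ℕ) : Set ((W → W) → (Fin n → W) → W) :=
  { F | ∃ p ∈ STset S, ∃ h : p.arity = n,
      ∀ φ v, F φ v = p.fn φ (fun i => v (Fin.cast h i)) }

/-- `⟦ST⟧` as a family indexed by numbers of oracles and word arguments. -/
def STfam (S : Sig) : ∀ k m : ℕ, Set ((Fin k → W → W) → (Fin m → W) → W) :=
  fun k m F => k = 1 ∧ (fun φ v => F (fun _ => φ) v) ∈ STsemN S m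

/-- The type-1 functions computed by oracle-free programs of `ST`. -/
def STsem1 (S : Sig) (m : ℕ) : Set ((Fin m → W) → W) :=
  { F | ∃ p ∈ STset S, OracleFreeC p.cmd ∧ ∃ h : p.arity = m,
      ∀ v, F v = p.fn (fun _ => []) (fun i => v (Fin.cast h i)) }

/-- Programs in `ST` typable using only tiers `⪯ t` for the program variables. -/
def STtSet (S : Sig) (t : ℕ) : Set (Prog S) :=
  { p | (∃ Γ Δ, SafeDelta S Δ ∧ (∀ x ∈ p.vars, Γ x ≤ t) ∧
       ∃ t' tin tout, TC S Γ Δ p.cmd t' tin tout) ∧ p.Terminating }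

def STtFam (S : Sig) (t : ℕ) : ∀ k m : ℕ, Set ((Fin k → W → W) → (Fin m → W) → W) :=
  fun k m F => k = 1 ∧
    ∃ p ∈ STtSet S t, ∃ h : p.arity = m,
      ∀ φ v, F (fun _ => φ) v = p.fn φ (fun i => v (Fin.cast h i))

/-! ### Runtime measures -/

/-- Size of a store, restricted to the variables of the program. -/
def storeSize (p : Prog S) (μ : ℕ → W) : ℕ := ∑ x ∈ p.vars, (μ x).length

/-- `mval p φ μ q`: the maximum of the size of the store and of the sizes of all
oracle answers in the derivation (whose oracle inputs are `q`). -/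
def mval (p : Prog S) (φ : W → W) (μ : ℕ → W) (q : List W) : ℕ :=
  max (storeSize p μ) (maxList (q.map fun v => (φ v).length))

/-- Polynomial step count for programs. -/
def Prog.PolyStepCount (p : Prog S) : Prop :=
  ∃ P : Polynomial ℕ, ∀ (φ : W → W) (μ μ' : ℕ → W) (n : ℕ) (q : List W),
    EvalC S φ p.cmd μ μ' n q → n ≤ P.eval (mval p φ μ q)

/-- Finite lookahead revision for programs. -/
def Prog.FiniteLookahead (p : Prog S) : Prop :=
  ∃ r : ℕ, ∀ (φ : W → W) (μ μ' : ℕ → W) (n : ℕ) (q : List W),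
    EvalC S φ p.cmd μ μ' n q → lrCount q ≤ r

/-- Store equivalence at tier `t`: stores agree on all variables of tier `⪰ t`. -/
def storeEquiv (Γ : ℕ → ℕ) (t : ℕ) (μ₁ μ₂ : ℕ → W) : Prop :=
  ∀ x, t ≤ Γ x → μ₁ x = μ₂ x

/-! ### The full signature (all neutral/positive operators available) -/

/-- The signature containing every total word function as an operator. -/
def SigAll : Sig := ⟨(m : ℕ) × ((Fin m → W) → W), Sigma.fst, fun o => o.snd⟩

/-! ### Padded oracles -/

/-- Strip the `10^n` padding from a word: `stripPad (w ++ 1 ++ 0^n) = w`. -/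
def stripPad (v : W) : W := ((v.reverse.dropWhile fun b => !b).tail).reverse

/-- The padded version `φ̃` of an oracle `φ` : it satisfies `φ̃ (w10ⁿ) = φ w`. -/
def tildeOracle (φ : W → W) : W → W := fun v => φ (stripPad v)



/-! #### Auxiliary lemmas -/

theorem BFF_maxList_cons (a : ℕ) (l : List ℕ) : maxList (a :: l) = max a (maxList l) := rfl

theorem BFF_le_maxList {a : ℕ} {l : List ℕ} (h : a ∈ l) : a ≤ maxList l := by
  induction l with
  | nil => cases h
  | cons b l ih =>
    rcases List.mem_cons.mp h with rfl | h
    · exact le_max_left _ _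
    · exact le_trans (ih h) (le_max_right _ _)

theorem BFF_maxList_le {l : List ℕ} {b : ℕ} (h : ∀ a ∈ l, a ≤ b) : maxList l ≤ b := by
  induction l with
  | nil => exact Nat.zero_le _
  | cons a l ih =>
    exact max_le (h a (List.mem_cons_self)) (ih fun a ha => h a (List.mem_cons_of_mem _ ha))

theorem BFF_maxList_sublist {l₁ l₂ : List ℕ} (h : List.Sublist l₁ l₂) :
    maxList l₁ ≤ maxList l₂ :=
  BFF_maxList_le fun a ha => BFF_le_maxList (h.mem ha)

theorem BFF_poly_mono (P : Polynomial ℕ) : Monotone fun x => P.eval x := by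
  intro a b h
  induction P using Polynomial.induction_on' with
  | add p q hp hq => simp only [Polynomial.eval_add]; exact Nat.add_le_add hp hq
  | monomial n c =>
    simp only [Polynomial.eval_monomial]
    exact Nat.mul_le_mul_left _ (Nat.pow_le_pow_left h n)

theorem BFF_eval_le (P : Polynomial ℕ) {a b : ℕ} (h : a ≤ b) : P.eval a ≤ P.eval b :=
  BFF_poly_mono P h

/-- All infixes of a word, as a list. -/
def infixesL (w : W) : List W := w.tails.flatMap List.inits

theorem BFF_mem_infixesL {u w : W} : u ∈ infixesL w ↔ u <:+: w := by
  simp only [infixesL, List.mem_flatMap, List.mem_tails, List.mem_inits]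
  constructor
  · rintro ⟨a, ha, hu⟩; exact hu.isInfix.trans ha.isInfix
  · rintro ⟨s, t, rfl⟩
    exact ⟨u ++ t, ⟨s, by rw [List.append_assoc]⟩, ⟨t, rfl⟩⟩

theorem BFF_infixesL_length (w : W) : (infixesL w).length ≤ (w.length + 1) ^ 2 := by
  rw [infixesL, List.length_flatMap]
  have h1 : (List.map (List.length ∘ List.inits) w.tails).sum
      ≤ (List.map (List.length ∘ List.inits) w.tails).length * (w.length + 1) := by
    have := List.sum_le_card_nsmul (List.map (List.length ∘ List.inits) w.tails)
      (w.length + 1) ?_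
    · simpa using this
    · intro x hx
      simp only [List.mem_map, Function.comp] at hx
      obtain ⟨a, ha, rfl⟩ := hx
      rw [List.length_inits]
      have := ((List.mem_tails _ _).mp ha).length_le
      omega
  calc (List.map (List.length ∘ List.inits) w.tails).sum
      ≤ (List.map (List.length ∘ List.inits) w.tails).length * (w.length + 1) := h1
    _ = (w.length + 1) * (w.length + 1) := by
        rw [List.length_map, List.length_tails]
    _ = (w.length + 1) ^ 2 := by ring


section TierLemmas

variable {S : Sig} (Γ : ℕ → ℕ) (V : Finset ℕ)

/-- Maximal length of the values of variables of `V` of tier at least `s`. -/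
def LvS (s : ℕ) (μ : ℕ → W) : ℕ := (V.filter fun x => s ≤ Γ x).sup fun x => (μ x).length

theorem LvS_anti {s s' : ℕ} (h : s ≤ s') (μ : ℕ → W) : LvS Γ V s' μ ≤ LvS Γ V s μ := by
  apply Finset.sup_le
  intro x hx
  rw [Finset.mem_filter] at hx
  exact Finset.le_sup (f := fun x => (μ x).length)
    (Finset.mem_filter.mpr ⟨hx.1, le_trans h hx.2⟩)

theorem len_le_LvS {x s : ℕ} {μ : ℕ → W} (hx : x ∈ V) (hs : s ≤ Γ x) :
    (μ x).length ≤ LvS Γ V s μ :=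
  Finset.le_sup (f := fun x => (μ x).length) (Finset.mem_filter.mpr ⟨hx, hs⟩)

theorem LvS_update_le {s : ℕ} {μ : ℕ → W} {x : ℕ} {v : W} :
    LvS Γ V s (Function.update μ x v) ≤ max (LvS Γ V s μ) v.length := by
  apply Finset.sup_le
  intro y hy
  by_cases h : y = x
  · subst h; rw [Function.update_self]; exact le_max_right _ _
  · rw [Function.update_of_ne h]
    exact le_trans (Finset.le_sup (f := fun x => (μ x).length) hy) (le_max_left _ _)

theorem LvS_update_low {s : ℕ} {μ : ℕ → W} {x : ℕ} {v : W} (h : Γ x < s) :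
    LvS Γ V s (Function.update μ x v) = LvS Γ V s μ := by
  apply Finset.sup_congr rfl
  intro y hy
  rw [Finset.mem_filter] at hy
  rw [Function.update_of_ne]
  rintro rfl; omega

/-- Constant words (outputs of nullary operators) occurring in an expression. -/
def seedE : Expr S → List W
  | .var _ => []
  | .op o a => S.sem o (fun _ => []) :: (List.ofFn fun i => seedE (a i)).flatten
  | .orac e₁ e₂ => seedE e₁ ++ seedE e₂

/-- Constant words occurring in a command. -/
def seedC : Cmd S → List W
  | .skip => []
  | .assign _ e => seedE e
  | .seq c₁ c₂ => seedC c₁ ++ seedC c₂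
  | .ite e c₁ c₂ => seedE e ++ seedC c₁ ++ seedC c₂
  | .wh e c => seedE e ++ seedC c

theorem BFF_q_le {φ : W → W} {v : W} {q : List W} (hv : v ∈ q) :
    (φ v).length ≤ maxList (q.map fun v => (φ v).length) :=
  BFF_le_maxList (List.mem_map_of_mem hv)

variable {Δ : OpEnv S}

/-- Expressions of tier `≥ t` only depend on variables of tier `≥ t`. -/
theorem evalE_agree (hΔ : SafeDelta S Δ) {e : Expr S} {s i o : ℕ} (h : TE S Γ Δ e s i o) :
    ∀ {t : ℕ} {φ : W → W} {μ₁ μ₂ : ℕ → W}, t ≤ s → (∀ x, t ≤ Γ x → μ₁ x = μ₂ x) →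
      evalE S φ μ₁ e = evalE S φ μ₂ e := by
  induction h with
  | var => exact fun hts hag => hag _ hts
  | @op o a tv t tin tout hmem _ ih =>
    intro t' φ μ₁ μ₂ hts hag
    simp only [evalE]
    congr 1
    funext j
    exact ih j (le_trans hts ((hΔ o tin tv t hmem).2.1 j)) hag
  | orac h₁ h₂ hlt hle ih₁ ih₂ =>
    intro t φ μ₁ μ₂ hts hag
    simp only [evalE]
    rw [ih₁ hts hag, ih₂ (le_trans hts hle) hag]

/-- With innermost tier `≤ s`, an expression of tier `≥ s` evaluates to a subword of a
seed constant, a boolean, or the value of a variable of tier `≥ s`. -/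
theorem evalE_infix (hΔ : SafeDelta S Δ) {e : Expr S} {s' i o : ℕ} (h : TE S Γ Δ e s' i o) :
    ∀ {s : ℕ} {φ : W → W} {μ : ℕ → W}, s ≤ s' → i ≤ s →
      ∃ u, (u = [true] ∨ u = [false] ∨ u ∈ seedE e ∨ ∃ y ∈ varsE e, s ≤ Γ y ∧ u = μ y) ∧
        evalE S φ μ e <:+: u := by
  induction h with
  | @var x tin tout =>
    intro s φ μ hs hi
    exact ⟨μ x, Or.inr (Or.inr (Or.inr ⟨x, Finset.mem_singleton_self x, hs, rfl⟩)),
      List.infix_refl _⟩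
  | @op o a tv t tin tout hmem harg ih =>
    intro s φ μ hs hi
    obtain ⟨hpos, hle1, hle2, hle3, hposneq⟩ := hΔ o tin tv t hmem
    by_cases har : 0 < S.ar o
    · have hneut : S.Neutral o := by
        rcases (hpos har).1 with hn | hp
        · exact hn
        · by_contra hnn
          exact absurd (hposneq ⟨hp, hnn⟩) (by omega)
      rcases hneut with h0 | hbool | hsub
      · omega
      · rcases hbool (fun j => evalE S φ μ (a j)) with hb | hb
        · exact ⟨[false], Or.inr (Or.inl rfl), by rw [show evalE S φ μ (.op o a) = [false] from hb]⟩
        · exact ⟨[true], Or.inl rfl, by rw [show evalE S φ μ (.op o a) = [true] from hb]⟩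
      · obtain ⟨j, hj⟩ := hsub (fun j => evalE S φ μ (a j))
        obtain ⟨u, hu, hinf⟩ := ih j (le_trans hs (hle1 j)) hi
        refine ⟨u, ?_, (show evalE S φ μ (.op o a) <:+: evalE S φ μ (a j) from hj).trans hinf⟩
        rcases hu with h | h | h | ⟨y, hy, hsy, h⟩
        · exact Or.inl h
        · exact Or.inr (Or.inl h)
        · exact Or.inr (Or.inr (Or.inl (List.mem_cons_of_mem _ (List.mem_flatten.mpr
            ⟨seedE (a j), List.mem_ofFn.mpr ⟨j, rfl⟩, h⟩))))
        · exact Or.inr (Or.inr (Or.inr ⟨y, Finset.mem_biUnion.mpr ⟨j, Finset.mem_univ j, hy⟩,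
            hsy, h⟩))
    · have har0 : S.ar o = 0 := by omega
      refine ⟨S.sem o (fun _ => []), Or.inr (Or.inr (Or.inl (List.mem_cons_self))), ?_⟩
      have : (fun j => evalE S φ μ (a j)) = (fun _ => ([] : W)) := by
        funext j
        exact absurd j.isLt (by omega)
      rw [show evalE S φ μ (.op o a) = S.sem o (fun j => evalE S φ μ (a j)) from rfl, this]
  | @orac e₁ e₂ t tin tout h₁ h₂ hlt hle ih₁ ih₂ =>
    intro s φ μ hs hi
    omega

/-- Length bound for the value of a typed expression. -/
theorem evalE_len (hΔ : SafeDelta S Δ) {e : Expr S} {s' i o : ℕ} (h : TE S Γ Δ e s' i o) :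
    (∀ y ∈ varsE e, y ∈ V) →
    ∃ C : ℕ, ∀ (φ : W → W) (μ : ℕ → W),
      (evalE S φ μ e).length ≤
        max (LvS Γ V s' μ) (maxList ((queriesE S φ μ e).map fun v => (φ v).length)) + C := by
  induction h with
  | @var x tin tout =>
    intro hV
    refine ⟨0, fun φ μ => ?_⟩
    have h1 := len_le_LvS Γ V (μ := μ) (hV x (Finset.mem_singleton_self x)) (le_refl (Γ x))
    have h2 : (evalE S φ μ (.var x)).length = (μ x).length := rfl
    rw [h2]
    exact le_trans h1 (le_trans (le_max_left _ _) (Nat.le_add_right _ _))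
  | @op o a tv t tin tout hmem harg ih =>
    intro hV
    obtain ⟨hpos, hle1, hle2, hle3, hposneq⟩ := hΔ o tin tv t hmem
    choose Cf hCf using fun j =>
      ih j (fun y hy => hV y (Finset.mem_biUnion.mpr ⟨j, Finset.mem_univ j, hy⟩))
    set CM := Finset.univ.sup Cf with hCM
    have argb : ∀ (φ : W → W) (μ : ℕ → W) (j : Fin (S.ar o)),
        (evalE S φ μ (a j)).length ≤
          max (LvS Γ V t μ)
            (maxList ((queriesE S φ μ (.op o a)).map fun v => (φ v).length)) + CM := by
      intro φ μ j
      have h1 := hCf j φ μ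
      have h2 : LvS Γ V (tv j) μ ≤ LvS Γ V t μ := LvS_anti Γ V (hle1 j) μ
      have h3 : maxList ((queriesE S φ μ (a j)).map fun v => (φ v).length) ≤
          maxList ((queriesE S φ μ (.op o a)).map fun v => (φ v).length) := by
        apply BFF_maxList_sublist
        apply List.Sublist.map
        exact List.sublist_flatten_of_mem (List.mem_ofFn.mpr ⟨j, rfl⟩)
      have h4 : Cf j ≤ CM := Finset.le_sup (Finset.mem_univ j)
      omega
    by_cases har : 0 < S.ar o
    · rcases (hpos har).1 with hn | hp
      · rcases hn with h0 | hbool | hsub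
        · exact absurd h0 (by omega)
        · refine ⟨CM + 1, fun φ μ => ?_⟩
          rcases hbool (fun j => evalE S φ μ (a j)) with hb | hb <;>
          · rw [show evalE S φ μ (.op o a) = _ from hb]
            simp only [List.length_cons, List.length_nil]
            omega
        · refine ⟨CM, fun φ μ => ?_⟩
          obtain ⟨j, hj⟩ := hsub (fun j => evalE S φ μ (a j))
          have := (show evalE S φ μ (.op o a) <:+: evalE S φ μ (a j) from hj).length_le
          exact le_trans this (argb φ μ j)
      · obtain ⟨cp, hcp⟩ := hp
        refine ⟨CM + cp, fun φ μ => ?_⟩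
        have h1 := hcp (fun j => evalE S φ μ (a j))
        have h2 : (Finset.univ.sup fun j => (evalE S φ μ (a j)).length) ≤
            max (LvS Γ V t μ)
              (maxList ((queriesE S φ μ (.op o a)).map fun v => (φ v).length)) + CM :=
          Finset.sup_le fun j _ => argb φ μ j
        have h3 : (evalE S φ μ (.op o a)).length
            = (S.sem o fun j => evalE S φ μ (a j)).length := rfl
        omega
    · have har0 : S.ar o = 0 := by omega
      refine ⟨(S.sem o (fun _ => [])).length, fun φ μ => ?_⟩
      have heq : (fun j => evalE S φ μ (a j)) = (fun _ => ([] : W)) := by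
        funext j; exact absurd j.isLt (by omega)
      have h3 : (evalE S φ μ (.op o a)) = S.sem o (fun _ => []) := by
        rw [show evalE S φ μ (.op o a) = S.sem o (fun j => evalE S φ μ (a j)) from rfl, heq]
      rw [h3]
      omega
  | @orac e₁ e₂ t tin tout h₁ h₂ hlt hle ih₁ ih₂ =>
    intro hV
    refine ⟨0, fun φ μ => ?_⟩
    have hq : padTrunc (evalE S φ μ e₁) (evalE S φ μ e₂) ∈ queriesE S φ μ (.orac e₁ e₂) := by
      simp [queriesE]
    have := BFF_q_le (φ := φ) hq
    calc (evalE S φ μ (.orac e₁ e₂)).length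
        = (φ (padTrunc (evalE S φ μ e₁) (evalE S φ μ e₂))).length := rfl
      _ ≤ _ := le_trans this (by omega)

end TierLemmas


section CmdLemmas

variable {S : Sig} (Γ : ℕ → ℕ) {Δ : OpEnv S}

theorem TC_inv_seq {c₁ c₂ : Cmd S} {t i o : ℕ} (h : TC S Γ Δ (.seq c₁ c₂) t i o) :
    TC S Γ Δ c₁ t i o ∧ TC S Γ Δ c₂ t i o := by
  generalize hc : Cmd.seq c₁ c₂ = c at h
  induction h with
  | sub h ih => obtain ⟨h₁, h₂⟩ := ih hc; exact ⟨h₁.sub, h₂.sub⟩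
  | skip => cases hc
  | assign he hxe => cases hc
  | seq h₁ h₂ ih₁ ih₂ => cases hc; exact ⟨h₁, h₂⟩
  | ite he h₁ h₂ ih₁ ih₂ => cases hc
  | whW he hcb h1 h2 ih => cases hc
  | wh0 he hcb h1 ih => cases hc

theorem TC_inv_assign {x : ℕ} {e : Expr S} {t i o : ℕ} (h : TC S Γ Δ (.assign x e) t i o) :
    Γ x ≤ t ∧ ∃ s', Γ x ≤ s' ∧ TE S Γ Δ e s' i o := by
  generalize hc : Cmd.assign x e = c at h
  induction h with
  | sub h ih => obtain ⟨h₁, h₂⟩ := ih hc; exact ⟨by omega, h₂⟩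
  | skip => cases hc
  | assign he hxe => cases hc; exact ⟨le_refl _, _, hxe, he⟩
  | seq h₁ h₂ ih₁ ih₂ => cases hc
  | ite he h₁ h₂ ih₁ ih₂ => cases hc
  | whW he hcb h1 h2 ih => cases hc
  | wh0 he hcb h1 ih => cases hc

theorem TC_inv_ite {e : Expr S} {c₁ c₂ : Cmd S} {t i o : ℕ} (h : TC S Γ Δ (.ite e c₁ c₂) t i o) :
    ∃ t₀, t₀ ≤ t ∧ TE S Γ Δ e t₀ i o ∧ TC S Γ Δ c₁ t₀ i o ∧ TC S Γ Δ c₂ t₀ i o := by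
  generalize hc : Cmd.ite e c₁ c₂ = c at h
  induction h with
  | sub h ih =>
    obtain ⟨t₀, h0, h1, h2, h3⟩ := ih hc
    exact ⟨t₀, by omega, h1, h2, h3⟩
  | skip => cases hc
  | assign he hxe => cases hc
  | seq h₁ h₂ ih₁ ih₂ => cases hc
  | ite he h₁ h₂ ih₁ ih₂ => cases hc; exact ⟨_, le_refl _, he, h₁, h₂⟩
  | whW he hcb h1 h2 ih => cases hc
  | wh0 he hcb h1 ih => cases hc

theorem TC_inv_wh {e : Expr S} {c : Cmd S} {t i o : ℕ} (h : TC S Γ Δ (.wh e c) t i o) :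
    ∃ t₀ o', 1 ≤ t₀ ∧ t₀ ≤ t ∧ TE S Γ Δ e t₀ i o' ∧ TC S Γ Δ c t₀ t₀ o' ∧
      TC S Γ Δ (.wh e c) t₀ i o := by
  generalize hc : Cmd.wh e c = c' at h
  induction h with
  | sub h ih =>
    obtain ⟨t₀, o', h0, h1, h2, h3, h4⟩ := ih hc
    exact ⟨t₀, o', h0, by omega, h2, h3, h4⟩
  | skip => cases hc
  | assign he hxe => cases hc
  | seq h₁ h₂ ih₁ ih₂ => cases hc
  | ite he h₁ h₂ ih₁ ih₂ => cases hc
  | whW he hcb h1 h2 ih => cases hc; exact ⟨_, _, h1, le_refl _, he, hcb, TC.whW he hcb h1 h2⟩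
  | wh0 he hcb h1 ih => cases hc; exact ⟨_, _, h1, le_refl _, he, hcb, TC.wh0 he hcb h1⟩

/-- Executing a command does not modify variables not occurring in it. -/
theorem evalC_untouched {φ : W → W} {c : Cmd S} {μ μ' : ℕ → W} {n : ℕ} {q : List W}
    (h : EvalC S φ c μ μ' n q) : ∀ x, x ∉ varsC c → μ' x = μ x := by
  induction h with
  | skip => intro x hx; rfl
  | @assign μ x0 e =>
    intro x hx
    have hne : x ≠ x0 := fun hh => hx (by rw [hh, varsC]; exact Finset.mem_insert_self _ _)
    rw [Function.update_of_ne hne]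
  | @seq c₁ c₂ μ μ₁ μ₂ n₁ n₂ q₁ q₂ h₁ h₂ ih₁ ih₂ =>
    intro x hx
    rw [varsC, Finset.mem_union] at hx
    rw [ih₂ x (fun m => hx (Or.inr m)), ih₁ x (fun m => hx (Or.inl m))]
  | @ifT e c₁ c₀ μ μ' n q hg hb ih =>
    intro x hx
    rw [varsC, Finset.mem_union, Finset.mem_union] at hx
    exact ih x (fun m => hx (Or.inl (Or.inr m)))
  | @ifF e c₁ c₀ μ μ' n q hg hb ih =>
    intro x hx
    rw [varsC, Finset.mem_union] at hx
    exact ih x (fun m => hx (Or.inr m))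
  | whF hg => intro x hx; rfl
  | @whT e c μ μ₁ μ₂ n₁ n₂ q₁ q₂ hg hb hw ihb ihw =>
    intro x hx
    have hx' : x ∉ varsC c := fun m => hx (by rw [varsC, Finset.mem_union]; exact Or.inr m)
    rw [ihw x hx, ihb x hx']

/-- A command of tier `t` does not modify variables of tier `> t`. -/
theorem evalC_high {φ : W → W} : ∀ {c : Cmd S} {μ μ' : ℕ → W} {n : ℕ} {q : List W},
    EvalC S φ c μ μ' n q →
    ∀ {t i o : ℕ}, TC S Γ Δ c t i o → ∀ x, t < Γ x → μ' x = μ x := by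
  intro c μ μ' n q h
  induction h with
  | skip => intro t i o ht x hx; rfl
  | @assign μ x0 e =>
    intro t i o ht x hx
    obtain ⟨h1, -⟩ := TC_inv_assign Γ ht
    have hne : x ≠ x0 := fun hh => by rw [hh] at hx; omega
    rw [Function.update_of_ne hne]
  | seq h₁ h₂ ih₁ ih₂ =>
    intro t i o ht x hx
    obtain ⟨t1, t2⟩ := TC_inv_seq Γ ht
    rw [ih₂ t2 x hx, ih₁ t1 x hx]
  | ifT hg hb ih =>
    intro t i o ht x hx
    obtain ⟨t₀, ht₀, he, h1, h2⟩ := TC_inv_ite Γ ht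
    exact ih h1 x (by omega)
  | ifF hg hb ih =>
    intro t i o ht x hx
    obtain ⟨t₀, ht₀, he, h1, h2⟩ := TC_inv_ite Γ ht
    exact ih h2 x (by omega)
  | whF hg => intro t i o ht x hx; rfl
  | whT hg hb hw ihb ihw =>
    intro t i o ht x hx
    obtain ⟨t₀, o', h1t, ht₀, he, hcb, hwh⟩ := TC_inv_wh Γ ht
    rw [ihw hwh x (by omega), ihb hcb x (by omega)]

/-- Determinism of the evolution of the tier `≥ s` part of the store. -/
theorem evalC_agree (hΔ : SafeDelta S Δ) {φ : W → W} :
    ∀ {c : Cmd S} {μ₁ μ₁' : ℕ → W} {n₁ : ℕ} {q₁ : List W}, EvalC S φ c μ₁ μ₁' n₁ q₁ →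
    ∀ {t i o : ℕ}, TC S Γ Δ c t i o →
    ∀ {s : ℕ} {μ₂ μ₂' : ℕ → W} {n₂ : ℕ} {q₂ : List W}, EvalC S φ c μ₂ μ₂' n₂ q₂ →
    (∀ x, s ≤ Γ x → μ₁ x = μ₂ x) → ∀ x, s ≤ Γ x → μ₁' x = μ₂' x := by
  intro c μ₁ μ₁' n₁ q₁ h₁
  induction h₁ with
  | skip =>
    intro t i o ht s μ₂ μ₂' n₂ q₂ h₂ hag x hx
    cases h₂; exact hag x hx
  | @assign μ x0 e =>
    intro t i o ht s μ₂ μ₂' n₂ q₂ h₂ hag x hx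
    cases h₂
    obtain ⟨h1, s', hs', he⟩ := TC_inv_assign Γ ht
    by_cases hxx : x = x0
    · subst hxx
      rw [Function.update_self, Function.update_self]
      rw [evalE_agree Γ hΔ he (le_trans hx hs') hag]
    · rw [Function.update_of_ne hxx, Function.update_of_ne hxx]; exact hag x hx
  | seq h₁ h₂ ih₁ ih₂ =>
    intro t i o ht s μ₂ μ₂' n₂ q₂ hh hag x hx
    obtain ⟨t1, t2⟩ := TC_inv_seq Γ ht
    cases hh with
    | seq g₁ g₂ => exact ih₂ t2 g₂ (ih₁ t1 g₁ hag) x hx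
  | @ifT e c₁ c₀ μ μ' n q hg hb ih =>
    intro t i o ht s μ₂ μ₂' n₂ q₂ hh hag x hx
    obtain ⟨t₀, ht₀, he, hc1, hc0⟩ := TC_inv_ite Γ ht
    by_cases hst : s ≤ t₀
    · cases hh with
      | ifT hg₂ hb₂ => exact ih hc1 hb₂ hag x hx
      | ifF hg₂ hb₂ =>
        exfalso
        have hgg := evalE_agree (φ := φ) Γ hΔ he hst hag
        rw [hg, hg₂] at hgg; simp at hgg
    · have hit : TC S Γ Δ (.ite e c₁ c₀) t₀ i o := TC.ite he hc1 hc0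
      have e1 := evalC_high Γ (EvalC.ifT hg hb) hit x (by omega)
      have e2 := evalC_high Γ hh hit x (by omega)
      rw [e1, e2]; exact hag x hx
  | @ifF e c₁ c₀ μ μ' n q hg hb ih =>
    intro t i o ht s μ₂ μ₂' n₂ q₂ hh hag x hx
    obtain ⟨t₀, ht₀, he, hc1, hc0⟩ := TC_inv_ite Γ ht
    by_cases hst : s ≤ t₀
    · cases hh with
      | ifF hg₂ hb₂ => exact ih hc0 hb₂ hag x hx
      | ifT hg₂ hb₂ =>
        exfalso
        have hgg := evalE_agree (φ := φ) Γ hΔ he hst hag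
        rw [hg, hg₂] at hgg; simp at hgg
    · have hit : TC S Γ Δ (.ite e c₁ c₀) t₀ i o := TC.ite he hc1 hc0
      have e1 := evalC_high Γ (EvalC.ifF hg hb) hit x (by omega)
      have e2 := evalC_high Γ hh hit x (by omega)
      rw [e1, e2]; exact hag x hx
  | @whF e c μ hg =>
    intro t i o ht s μ₂ μ₂' n₂ q₂ hh hag x hx
    obtain ⟨t₀, o', h1t, ht₀, he, hcb, hwh⟩ := TC_inv_wh Γ ht
    by_cases hst : s ≤ t₀
    · cases hh with
      | whF hg₂ => exact hag x hx
      | whT hg₂ hb₂ hw₂ =>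
        exfalso
        have hgg := evalE_agree (φ := φ) Γ hΔ he hst hag
        rw [hg, hg₂] at hgg; simp at hgg
    · have e2 := evalC_high Γ hh hwh x (by omega)
      rw [e2]; exact hag x hx
  | @whT e c μ ν₁ ν₂ m₁ m₂ p₁ p₂ hg hb hw ihb ihw =>
    intro t i o ht s μ₂ μ₂' n₂ q₂ hh hag x hx
    obtain ⟨t₀, o', h1t, ht₀, he, hcb, hwh⟩ := TC_inv_wh Γ ht
    by_cases hst : s ≤ t₀
    · cases hh with
      | whF hg₂ =>
        exfalso
        have hgg := evalE_agree (φ := φ) Γ hΔ he hst hag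
        rw [hg, hg₂] at hgg; simp at hgg
      | whT hg₂ hb₂ hw₂ => exact ihw ht hw₂ (ihb hcb hb₂ hag) x hx
    · have e1 := evalC_high Γ (EvalC.whT hg hb hw) hwh x (by omega)
      have e2 := evalC_high Γ hh hwh x (by omega)
      rw [e1, e2]; exact hag x hx

/-- Subword invariant: with innermost tier `≤ s`, the final value of a variable of tier
`≥ s` is a subword of a seed constant, a boolean, or an initial value of tier `≥ s`. -/
theorem evalC_infix (hΔ : SafeDelta S Δ) {φ : W → W} :
    ∀ {c : Cmd S} {μ μ' : ℕ → W} {n : ℕ} {q : List W}, EvalC S φ c μ μ' n q →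
    ∀ {t i o : ℕ}, TC S Γ Δ c t i o → ∀ {s : ℕ}, t ≤ s → i ≤ s → ∀ x, s ≤ Γ x →
    ∃ u, (u = [true] ∨ u = [false] ∨ u ∈ seedC c ∨
          ∃ y, (y ∈ varsC c ∨ y = x) ∧ s ≤ Γ y ∧ u = μ y) ∧ μ' x <:+: u := by
  intro c μ μ' n q h
  induction h with
  | @skip μ =>
    intro t i o ht s hts his x hx
    exact ⟨μ x, Or.inr (Or.inr (Or.inr ⟨x, Or.inr rfl, hx, rfl⟩)), List.infix_refl _⟩
  | @assign μ x0 e =>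
    intro t i o ht s hts his x hx
    obtain ⟨h1, s', hs', he⟩ := TC_inv_assign Γ ht
    by_cases hxx : x = x0
    · subst hxx
      simp only [Function.update_self]
      obtain ⟨u, hu, hinf⟩ := evalE_infix Γ hΔ he (s := s) (le_trans hx hs') his
      refine ⟨u, ?_, hinf⟩
      rcases hu with h | h | h | ⟨y, hy, h2, h3⟩
      · exact Or.inl h
      · exact Or.inr (Or.inl h)
      · exact Or.inr (Or.inr (Or.inl h))
      · exact Or.inr (Or.inr (Or.inr ⟨y, Or.inl (by rw [varsC]; exact Finset.mem_insert_of_mem hy),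
          h2, h3⟩))
    · simp only [Function.update_of_ne hxx]
      exact ⟨μ x, Or.inr (Or.inr (Or.inr ⟨x, Or.inr rfl, hx, rfl⟩)), List.infix_refl _⟩
  | @seq c₁ c₂ μ μ₁ μ₂ n₁ n₂ q₁ q₂ h₁ h₂ ih₁ ih₂ =>
    intro t i o ht s hts his x hx
    obtain ⟨t1, t2⟩ := TC_inv_seq Γ ht
    obtain ⟨u, hu, hinf⟩ := ih₂ t2 hts his x hx
    rcases hu with h | h | h | ⟨y, hy, h2, h3⟩
    · exact ⟨u, Or.inl h, hinf⟩
    · exact ⟨u, Or.inr (Or.inl h), hinf⟩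
    · refine ⟨u, Or.inr (Or.inr (Or.inl ?_)), hinf⟩
      rw [seedC]; exact List.mem_append_right _ h
    · obtain ⟨u', hu', hinf'⟩ := ih₁ t1 hts his y h2
      refine ⟨u', ?_, hinf.trans (h3 ▸ hinf')⟩
      rcases hu' with g | g | g | ⟨z, hz, g2, g3⟩
      · exact Or.inl g
      · exact Or.inr (Or.inl g)
      · refine Or.inr (Or.inr (Or.inl ?_))
        rw [seedC]; exact List.mem_append_left _ g
      · refine Or.inr (Or.inr (Or.inr ⟨z, ?_, g2, g3⟩))
        rcases hz with hz | hz
        · exact Or.inl (by rw [varsC]; exact Finset.mem_union_left _ hz)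
        · subst hz
          rcases hy with hy | hy
          · exact Or.inl (by rw [varsC]; exact Finset.mem_union_right _ hy)
          · exact Or.inr hy
  | @ifT e c₁ c₀ μ μ' n q hg hb ih =>
    intro t i o ht s hts his x hx
    obtain ⟨t₀, ht₀, he, hc1, hc0⟩ := TC_inv_ite Γ ht
    obtain ⟨u, hu, hinf⟩ := ih hc1 (by omega) his x hx
    refine ⟨u, ?_, hinf⟩
    rcases hu with h | h | h | ⟨y, hy, h2, h3⟩
    · exact Or.inl h
    · exact Or.inr (Or.inl h)
    · refine Or.inr (Or.inr (Or.inl ?_))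
      rw [seedC]; exact List.mem_append_left _ (List.mem_append_right _ h)
    · refine Or.inr (Or.inr (Or.inr ⟨y, ?_, h2, h3⟩))
      rcases hy with hy | hy
      · refine Or.inl ?_
        rw [varsC]
        exact Finset.mem_union_left _ (Finset.mem_union_right _ hy)
      · exact Or.inr hy
  | @ifF e c₁ c₀ μ μ' n q hg hb ih =>
    intro t i o ht s hts his x hx
    obtain ⟨t₀, ht₀, he, hc1, hc0⟩ := TC_inv_ite Γ ht
    obtain ⟨u, hu, hinf⟩ := ih hc0 (by omega) his x hx
    refine ⟨u, ?_, hinf⟩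
    rcases hu with h | h | h | ⟨y, hy, h2, h3⟩
    · exact Or.inl h
    · exact Or.inr (Or.inl h)
    · refine Or.inr (Or.inr (Or.inl ?_))
      rw [seedC]; exact List.mem_append_right _ h
    · refine Or.inr (Or.inr (Or.inr ⟨y, ?_, h2, h3⟩))
      rcases hy with hy | hy
      · exact Or.inl (by rw [varsC]; exact Finset.mem_union_right _ hy)
      · exact Or.inr hy
  | @whF e c μ hg =>
    intro t i o ht s hts his x hx
    exact ⟨μ x, Or.inr (Or.inr (Or.inr ⟨x, Or.inr rfl, hx, rfl⟩)), List.infix_refl _⟩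
  | @whT e c μ ν₁ ν₂ m₁ m₂ p₁ p₂ hg hb hw ihb ihw =>
    intro t i o ht s hts his x hx
    obtain ⟨t₀, o', h1t, ht₀, he, hcb, hwh⟩ := TC_inv_wh Γ ht
    obtain ⟨u, hu, hinf⟩ := ihw hwh (by omega) his x hx
    rcases hu with h | h | h | ⟨y, hy, h2, h3⟩
    · exact ⟨u, Or.inl h, hinf⟩
    · exact ⟨u, Or.inr (Or.inl h), hinf⟩
    · exact ⟨u, Or.inr (Or.inr (Or.inl h)), hinf⟩
    · obtain ⟨u', hu', hinf'⟩ := ihb hcb (by omega) (by omega) y h2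
      refine ⟨u', ?_, hinf.trans (h3 ▸ hinf')⟩
      rcases hu' with g | g | g | ⟨z, hz, g2, g3⟩
      · exact Or.inl g
      · exact Or.inr (Or.inl g)
      · refine Or.inr (Or.inr (Or.inl ?_))
        rw [seedC]; exact List.mem_append_right _ g
      · refine Or.inr (Or.inr (Or.inr ⟨z, ?_, g2, g3⟩))
        rcases hz with hz | hz
        · exact Or.inl (by rw [varsC]; exact Finset.mem_union_right _ hz)
        · subst hz
          rcases hy with hy | hy
          · exact Or.inl hy
          · exact Or.inr hy

/-- Decomposition of a while run into its successive iterations. -/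
theorem wh_decomp {φ : W → W} :
    ∀ {c₀ : Cmd S} {μ μ' : ℕ → W} {n : ℕ} {q : List W}, EvalC S φ c₀ μ μ' n q →
    ∀ {e : Expr S} {c : Cmd S}, c₀ = .wh e c →
    ∃ (K : ℕ) (σ : ℕ → ℕ → W) (nn : ℕ → ℕ) (qq : ℕ → List W),
      σ 0 = μ ∧ σ K = μ' ∧
      (∀ j, j < K → evalE S φ (σ j) e = [true] ∧
        EvalC S φ c (σ j) (σ (j+1)) (nn j) (qq j) ∧ List.Sublist (qq j) q) ∧
      evalE S φ (σ K) e = [false] ∧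
      n ≤ (K + 1) * (sizeE e + 1) + ∑ j ∈ Finset.range K, nn j := by
  intro c₀ μ μ' n q h
  induction h with
  | skip => intro e c hc; cases hc
  | assign => intro e c hc; cases hc
  | seq h₁ h₂ ih₁ ih₂ => intro e c hc; cases hc
  | ifT hg hb ih => intro e c hc; cases hc
  | ifF hg hb ih => intro e c hc; cases hc
  | @whF e' c' μ hg =>
    intro e c hc
    injection hc with he hcc
    subst he; subst hcc
    refine ⟨0, fun _ => μ, fun _ => 0, fun _ => [], rfl, rfl, ?_, hg, by simp⟩
    intro j hj; omega
  | @whT e' c' μ ν₁ ν₂ m₁ m₂ p₁ p₂ hg hb hw ihb ihw =>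
    intro e c hc
    injection hc with he hcc
    subst he; subst hcc
    obtain ⟨K, σ, nn, qq, hσ0, hσK, hiter, hlast, hn⟩ := ihw rfl
    refine ⟨K + 1, fun j => match j with | 0 => μ | j+1 => σ j,
      fun j => match j with | 0 => m₁ | j+1 => nn j,
      fun j => match j with | 0 => p₁ | j+1 => qq j, rfl, hσK, ?_, hlast, ?_⟩
    · intro j hj
      match j with
      | 0 =>
        refine ⟨hg, ?_, ?_⟩
        · show EvalC S φ c' μ (σ 0) m₁ p₁
          rw [hσ0]; exact hb
        · show List.Sublist p₁ _
          exact (List.sublist_append_right _ _).trans (List.sublist_append_left _ _)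
      | j+1 =>
        obtain ⟨g1, g2, g3⟩ := hiter j (by omega)
        exact ⟨g1, g2, g3.trans (List.sublist_append_right _ _)⟩
    · have hsum : ∑ j ∈ Finset.range (K + 1),
          (fun j => match j with | 0 => m₁ | j+1 => nn j) j
          = (∑ j ∈ Finset.range K, nn j) + m₁ := by
        rw [Finset.sum_range_succ']
      have hmul : (K + 1 + 1) * (sizeE e' + 1) = (K + 1) * (sizeE e' + 1) + (sizeE e' + 1) := by
        ring
      rw [hsum, hmul]
      omega

end CmdLemmas


section Pigeonhole

variable {S : Sig} (Γ : ℕ → ℕ) (V : Finset ℕ) {Δ : OpEnv S}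

/-- Bound on the number of iterations of a while loop of tier `t`: the tier `≥ t` part of
the store evolves deterministically inside the values reachable by subwords, so it can
never repeat, and there are only polynomially many possibilities. -/
theorem wh_iter_bound (hΔ : SafeDelta S Δ) {φ : W → W} {e : Expr S} {c : Cmd S}
    {t i o' : ℕ} (he : TE S Γ Δ e t i o') (hc : TC S Γ Δ c t t o')
    (hV : ∀ x ∈ varsE e ∪ varsC c, x ∈ V)
    {K : ℕ} {σ : ℕ → ℕ → W} {nn : ℕ → ℕ} {qq : ℕ → List W}
    (hiter : ∀ j, j < K → evalE S φ (σ j) e = [true] ∧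
        EvalC S φ c (σ j) (σ (j+1)) (nn j) (qq j))
    (hlast : evalE S φ (σ K) e = [false]) :
    K + 1 ≤ ((2 + (seedC c).length + ((varsE e ∪ varsC c).filter fun x => t ≤ Γ x).card) *
      (max (LvS Γ V t (σ 0))
        (maxList ((([true] : W) :: ([false] : W) :: seedC c).map List.length)) + 1) ^ 2) ^
      ((varsE e ∪ varsC c).filter fun x => t ≤ Γ x).card := by
  set D : Finset ℕ := (varsE e ∪ varsC c).filter fun x => t ≤ Γ x with hD
  set SB : ℕ := maxList ((([true] : W) :: ([false] : W) :: seedC c).map List.length) with hSB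
  set bigL : List W := ([true] : W) :: ([false] : W) ::
    (seedC c ++ (D.sort (· ≤ ·)).map (σ 0)) with hbigL
  set F : Finset W := (bigL.flatMap infixesL).toFinset with hF
  have memF_of_infix : ∀ {v w : W}, w ∈ bigL → v <:+: w → v ∈ F := by
    intro v w hw hvw
    exact List.mem_toFinset.mpr (List.mem_flatMap.mpr ⟨w, hw, BFF_mem_infixesL.mpr hvw⟩)
  have mem0 : ∀ x ∈ D, σ 0 x ∈ bigL := by
    intro x hx
    refine List.mem_cons_of_mem _ (List.mem_cons_of_mem _ (List.mem_append_right _ ?_))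
    exact List.mem_map_of_mem ((Finset.mem_sort _).mpr hx)
  have claimMem : ∀ j, j ≤ K → ∀ x ∈ D, σ j x ∈ F := by
    intro j
    induction j with
    | zero => exact fun _ x hx => memF_of_infix (mem0 x hx) (List.infix_refl _)
    | succ j ihj =>
      intro hjK x hxD
      obtain ⟨-, hrun⟩ := hiter j (by omega)
      have hxt : t ≤ Γ x := (Finset.mem_filter.mp hxD).2
      obtain ⟨u, hu, hinf⟩ := evalC_infix Γ hΔ hrun hc (le_refl t) (le_refl t) x hxt
      rcases hu with h | h | h | ⟨y, hy, h2, h3⟩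
      · exact memF_of_infix (h ▸ List.mem_cons_self) hinf
      · exact memF_of_infix (h ▸ List.mem_cons_of_mem _ (List.mem_cons_self)) hinf
      · exact memF_of_infix
          (List.mem_cons_of_mem _ (List.mem_cons_of_mem _ (List.mem_append_left _ h))) hinf
      · have hyD : y ∈ D := by
          rcases hy with hy | hy
          · exact Finset.mem_filter.mpr ⟨Finset.mem_union_right _ hy, h2⟩
          · exact hy ▸ hxD
        obtain ⟨w, hw, hiw⟩ := List.mem_flatMap.mp (List.mem_toFinset.mp (ihj (by omega) y hyD))
        exact memF_of_infix hw ((h3 ▸ hinf).trans (BFF_mem_infixesL.mp hiw))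
  have untouched : ∀ j, j ≤ K → ∀ x, x ∉ varsC c → σ j x = σ 0 x := by
    intro j
    induction j with
    | zero => exact fun _ _ _ => rfl
    | succ j ihj =>
      intro hjK x hxc
      obtain ⟨-, hrun⟩ := hiter j (by omega)
      rw [evalC_untouched hrun x hxc, ihj (by omega) x hxc]
  have aux : ∀ a b, a < b → b ≤ K → (∀ x ∈ D, σ a x = σ b x) → False := by
    intro a b hab hbK hpt
    have hagree0 : ∀ x, t ≤ Γ x → σ a x = σ b x := by
      intro x hx
      by_cases hxm : x ∈ varsE e ∪ varsC c
      · exact hpt x (Finset.mem_filter.mpr ⟨hxm, hx⟩)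
      · have hxc : x ∉ varsC c := fun m => hxm (Finset.mem_union_right _ m)
        rw [untouched a (by omega) x hxc, untouched b hbK x hxc]
    have hstep : ∀ m, b + m ≤ K → ∀ x, t ≤ Γ x → σ (a + m) x = σ (b + m) x := by
      intro m
      induction m with
      | zero => exact fun _ => hagree0
      | succ m ihm =>
        intro hbm x hx
        obtain ⟨-, run_a⟩ := hiter (a + m) (by omega)
        obtain ⟨-, run_b⟩ := hiter (b + m) (by omega)
        exact evalC_agree Γ hΔ run_a hc run_b (ihm (by omega)) x hx
    have hga := evalE_agree (φ := φ) Γ hΔ he (le_refl t) (hstep (K - b) (by omega))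
    have hbb : b + (K - b) = K := by omega
    rw [hbb] at hga
    obtain ⟨hga', -⟩ := hiter (a + (K - b)) (by omega)
    rw [hga', hlast] at hga
    simp at hga
  have hinj : Function.Injective
      (fun (j : Fin (K + 1)) => (fun (x : ↥D) =>
        (⟨σ j.val x.val, claimMem j.val (by omega) x.val x.property⟩ : ↥F))) := by
    intro a b hab
    by_contra hne
    have hpt : ∀ x ∈ D, σ a.val x = σ b.val x := by
      intro x hx
      have := congrFun hab ⟨x, hx⟩
      exact congrArg Subtype.val this
    rcases Nat.lt_or_ge a.val b.val with h | h
    · exact aux a.val b.val h (by omega) hpt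
    · have h' : b.val < a.val := by
        rcases Nat.lt_or_ge b.val a.val with h' | h'
        · exact h'
        · exact absurd (Fin.ext (by omega)) hne
      exact aux b.val a.val h' (by omega) (fun x hx => (hpt x hx).symm)
  have hcard1 : K + 1 ≤ F.card ^ D.card := by
    have h1 := Fintype.card_le_of_injective _ hinj
    rw [Fintype.card_fin, Fintype.card_fun, Fintype.card_coe, Fintype.card_coe] at h1
    exact h1
  have hlenw : ∀ w ∈ bigL, w.length ≤ max (LvS Γ V t (σ 0)) SB := by
    intro w hw
    rcases List.mem_cons.mp hw with rfl | hw
    · refine le_trans ?_ (le_max_right _ _)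
      exact BFF_le_maxList (List.mem_map_of_mem (List.mem_cons_self))
    rcases List.mem_cons.mp hw with rfl | hw
    · refine le_trans ?_ (le_max_right _ _)
      exact BFF_le_maxList (List.mem_map_of_mem
        (List.mem_cons_of_mem _ (List.mem_cons_self)))
    rcases List.mem_append.mp hw with hw | hw
    · refine le_trans ?_ (le_max_right _ _)
      exact BFF_le_maxList (List.mem_map_of_mem
        (List.mem_cons_of_mem _ (List.mem_cons_of_mem _ hw)))
    · obtain ⟨x, hx, rfl⟩ := List.mem_map.mp hw
      have hxD : x ∈ D := (Finset.mem_sort _).mp hx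
      have hxV : x ∈ V := hV x (Finset.mem_filter.mp hxD).1
      exact le_trans (len_le_LvS Γ V hxV (Finset.mem_filter.mp hxD).2) (le_max_left _ _)
  have hFcard : F.card ≤ (2 + (seedC c).length + D.card) *
      (max (LvS Γ V t (σ 0)) SB + 1) ^ 2 := by
    have h1 : F.card ≤ (bigL.flatMap infixesL).length := List.toFinset_card_le _
    rw [List.length_flatMap] at h1
    have h2 : (List.map (List.length ∘ infixesL) bigL).sum ≤
        (List.map (List.length ∘ infixesL) bigL).length *
          ((max (LvS Γ V t (σ 0)) SB + 1) ^ 2) := by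
      have h3 := List.sum_le_card_nsmul (List.map (List.length ∘ infixesL) bigL)
        ((max (LvS Γ V t (σ 0)) SB + 1) ^ 2) ?_
      · simpa using h3
      · intro a ha
        simp only [List.mem_map, Function.comp] at ha
        obtain ⟨w, hw, rfl⟩ := ha
        refine le_trans (BFF_infixesL_length w) ?_
        exact Nat.pow_le_pow_left (by have := hlenw w hw; omega) 2
    have h4 : (List.map (List.length ∘ infixesL) bigL).length = 2 + ((seedC c).length + D.card) := by
      simp [hbigL, Finset.length_sort]
      omega
    rw [h4, show 2 + ((seedC c).length + D.card) = 2 + (seedC c).length + D.card from by omega]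
      at h2
    exact le_trans h1 h2
  refine le_trans hcard1 ?_
  exact Nat.pow_le_pow_left hFcard _

end Pigeonhole


section MainInduction

variable {S : Sig} (Γ : ℕ → ℕ) (V : Finset ℕ) {Δ : OpEnv S}

/-- Specification carried through the main induction: the polynomial `P` bounds the
number of steps in terms of the sizes of tier `≥ 1` data and oracle answers, the tier
`≥ max(t, tin)` data can only be replaced by bounded data, and each tier `≥ s` may grow
only by a polynomial in the data of tiers `≥ s+1`. -/
def SpecP (P : Polynomial ℕ) (c : Cmd S) (t i : ℕ) : Prop :=
  ∀ (φ : W → W) (μ μ' : ℕ → W) (n : ℕ) (q : List W), EvalC S φ c μ μ' n q →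
    (n ≤ P.eval (max (LvS Γ V 1 μ) (maxList (q.map fun v => (φ v).length)))) ∧
    (∀ s, t ≤ s → i ≤ s → LvS Γ V s μ' ≤ max (LvS Γ V s μ) (P.eval 0)) ∧
    (∀ s, 1 ≤ s → LvS Γ V s μ' ≤
      max (LvS Γ V s μ) (maxList (q.map fun v => (φ v).length)) +
        P.eval (max (LvS Γ V (s+1) μ) (maxList (q.map fun v => (φ v).length))))

theorem while_spec (hΔ : SafeDelta S Δ) {e : Expr S} {c : Cmd S} {t i o' : ℕ}
    (he : TE S Γ Δ e t i o') (hc : TC S Γ Δ c t t o') (h1t : 1 ≤ t)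
    (hV : ∀ x ∈ varsE e ∪ varsC c, x ∈ V)
    {Pc : Polynomial ℕ} (hPc : SpecP Γ V Pc c t t) :
    ∃ P : Polynomial ℕ, SpecP Γ V P (.wh e c) t i := by
  classical
  set SB : ℕ := maxList ((([true] : W) :: ([false] : W) :: seedC c).map List.length) with hSBdef
  set Dc : ℕ := ((varsE e ∪ varsC c).filter fun x => t ≤ Γ x).card with hDcdef
  set A : ℕ := 2 + (seedC c).length + Dc with hAdef
  set Q : Polynomial ℕ := (Polynomial.C A * (Polynomial.X + Polynomial.C (SB + 1)) ^ 2) ^ Dc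
    with hQdef
  set cstar : ℕ := Pc.eval 0 with hcstar
  set Fp : ℕ → Polynomial ℕ := fun k => Nat.rec (Polynomial.X + Polynomial.C cstar)
    (fun _ p => Polynomial.X + Polynomial.C cstar + Q * (Pc.comp p)) k with hFpdef
  have hFp0 : Fp 0 = Polynomial.X + Polynomial.C cstar := rfl
  have hFpS : ∀ k, Fp (k + 1) = Polynomial.X + Polynomial.C cstar + Q * (Pc.comp (Fp k)) :=
    fun _ => rfl
  have hQeval : ∀ y : ℕ, Q.eval y = (A * (y + (SB + 1)) ^ 2) ^ Dc := by
    intro y; rw [hQdef]; simp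
  have hFpGe : ∀ k y, y ≤ (Fp k).eval y := by
    intro k y
    cases k with
    | zero => rw [hFp0]; simp
    | succ k =>
      rw [hFpS]
      simp only [Polynomial.eval_add, Polynomial.eval_mul, Polynomial.eval_comp,
        Polynomial.eval_X, Polynomial.eval_C]
      omega
  have hFpMono : ∀ k y, (Fp k).eval y ≤ (Fp (k + 1)).eval y := by
    intro k
    induction k with
    | zero =>
      intro y
      rw [hFpS, hFp0]
      simp
    | succ k ih =>
      intro y
      rw [hFpS k, hFpS (k+1)]
      simp only [Polynomial.eval_add, Polynomial.eval_mul, Polynomial.eval_comp,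
        Polynomial.eval_X, Polynomial.eval_C]
      have h2 := BFF_poly_mono Pc (ih y)
      exact Nat.add_le_add_left (Nat.mul_le_mul_left _ h2) _
  refine ⟨Polynomial.C (sizeE e + 1) * Q + Q * (Pc.comp (Fp t)) +
    (∑ k ∈ Finset.range (t + 1), Q * (Pc.comp (Fp k))) + Polynomial.C cstar, ?_⟩
  intro φ μ μ' n q hev
  obtain ⟨K, σ, nn, qq, hσ0, hσK, hiter, hlast, hn⟩ := wh_decomp hev rfl
  subst hσ0
  subst hσK
  set M : ℕ := maxList (q.map fun v => (φ v).length) with hM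
  have hMj : ∀ j, j < K → maxList ((qq j).map fun v => (φ v).length) ≤ M := by
    intro j hj
    exact BFF_maxList_sublist (((hiter j hj).2.2).map _)
  have hspec := fun j (hj : j < K) => hPc φ (σ j) (σ (j+1)) (nn j) (qq j) ((hiter j hj).2.1)
  have hK : ∀ y : ℕ, LvS Γ V t (σ 0) ≤ y → K + 1 ≤ Q.eval y := by
    intro y hy
    have hKb := wh_iter_bound Γ V hΔ he hc hV
      (fun j hj => ⟨(hiter j hj).1, (hiter j hj).2.1⟩) hlast
    refine le_trans hKb ?_
    rw [hQeval y, hAdef, hDcdef, hSBdef]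
    apply Nat.pow_le_pow_left
    apply Nat.mul_le_mul_left
    apply Nat.pow_le_pow_left
    have h2 := le_max_left (LvS Γ V t (σ 0))
      (maxList ((([true] : W) :: ([false] : W) :: seedC c).map List.length))
    have h3 := le_max_right (LvS Γ V t (σ 0))
      (maxList ((([true] : W) :: ([false] : W) :: seedC c).map List.length))
    omega
  have hSt : ∀ s, t ≤ s → ∀ j, j ≤ K → LvS Γ V s (σ j) ≤ max (LvS Γ V s (σ 0)) cstar := by
    intro s hs j
    induction j with
    | zero => exact fun _ => le_max_left _ _
    | succ j ih =>
      intro hjK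
      have h1 := (hspec j (by omega)).2.1 s hs hs
      have h2 := ih (by omega)
      rw [← hcstar] at h1
      omega
  have hClaim2 : ∀ k s, 1 ≤ s →
      (∀ j, j ≤ K → LvS Γ V (s+1) (σ j) ≤ (Fp k).eval (max (LvS Γ V (s+1) (σ 0)) M)) →
      ∀ j, j ≤ K → LvS Γ V s (σ j) ≤ max (LvS Γ V s (σ 0)) M +
        j * Pc.eval ((Fp k).eval (max (LvS Γ V (s+1) (σ 0)) M)) := by
    intro k s hs1 hB j
    induction j with
    | zero =>
      intro _
      have := le_max_left (LvS Γ V s (σ 0)) M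
      omega
    | succ j ih =>
      intro hjK
      have hgrow := (hspec j (by omega)).2.2 s hs1
      have hMle := hMj j (by omega)
      have hIH := ih (by omega)
      have hArg : Pc.eval (max (LvS Γ V (s+1) (σ j))
            (maxList ((qq j).map fun v => (φ v).length)))
          ≤ Pc.eval ((Fp k).eval (max (LvS Γ V (s+1) (σ 0)) M)) := by
        apply BFF_poly_mono
        have h1 := hB j (by omega)
        have h2 := le_max_right (LvS Γ V (s+1) (σ 0)) M
        have h3 := hFpGe k (max (LvS Γ V (s+1) (σ 0)) M)
        omega
      have hmul : (j+1) * Pc.eval ((Fp k).eval (max (LvS Γ V (s+1) (σ 0)) M))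
          = j * Pc.eval ((Fp k).eval (max (LvS Γ V (s+1) (σ 0)) M)) +
            Pc.eval ((Fp k).eval (max (LvS Γ V (s+1) (σ 0)) M)) := by ring
      have h4 := le_max_right (LvS Γ V s (σ 0)) M
      rw [hmul]
      omega
  have hBnd : ∀ k s, 1 ≤ s → t ≤ s + k → ∀ j, j ≤ K →
      LvS Γ V s (σ j) ≤ (Fp k).eval (max (LvS Γ V s (σ 0)) M) := by
    intro k
    induction k with
    | zero =>
      intro s hs1 hts j hj
      have h1 := hSt s (by omega) j hj
      rw [hFp0]
      simp only [Polynomial.eval_add, Polynomial.eval_X, Polynomial.eval_C]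
      have := le_max_left (LvS Γ V s (σ 0)) M
      have := le_max_right (LvS Γ V s (σ 0)) M
      omega
    | succ k ih =>
      intro s hs1 hts j hj
      by_cases hts' : t ≤ s + k
      · exact le_trans (ih s hs1 hts' j hj) (hFpMono k _)
      · have hB := fun j hj => ih (s+1) (by omega) (by omega) j hj
        have h2 := hClaim2 k s hs1 hB j hj
        have hKQ : K + 1 ≤ Q.eval (max (LvS Γ V s (σ 0)) M) := by
          apply hK
          exact le_trans (LvS_anti Γ V (by omega) _) (le_max_left _ _)
        have hPc2 : Pc.eval ((Fp k).eval (max (LvS Γ V (s+1) (σ 0)) M)) ≤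
            Pc.eval ((Fp k).eval (max (LvS Γ V s (σ 0)) M)) := by
          apply BFF_poly_mono
          apply BFF_poly_mono
          have h3 := LvS_anti Γ V (show s ≤ s + 1 by omega) (σ 0)
          omega
        have hje : j * Pc.eval ((Fp k).eval (max (LvS Γ V (s+1) (σ 0)) M)) ≤
            Q.eval (max (LvS Γ V s (σ 0)) M) *
              Pc.eval ((Fp k).eval (max (LvS Γ V s (σ 0)) M)) :=
          Nat.mul_le_mul (by omega) hPc2
        rw [hFpS]
        simp only [Polynomial.eval_add, Polynomial.eval_mul, Polynomial.eval_comp,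
          Polynomial.eval_X, Polynomial.eval_C]
        omega
  refine ⟨?_, ?_, ?_⟩
  · -- step count
    have hnn : ∀ j, j < K →
        nn j ≤ Pc.eval ((Fp t).eval (max (LvS Γ V 1 (σ 0)) M)) := by
      intro j hj
      have h1 := (hspec j hj).1
      refine le_trans h1 (BFF_poly_mono Pc ?_)
      have h2 := hBnd t 1 (le_refl 1) (by omega) j (by omega)
      have h3 := hMj j hj
      have h4 := hFpGe t (max (LvS Γ V 1 (σ 0)) M)
      have h5 := le_max_right (LvS Γ V 1 (σ 0)) M
      omega
    have hsum : ∑ j ∈ Finset.range K, nn j ≤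
        K * Pc.eval ((Fp t).eval (max (LvS Γ V 1 (σ 0)) M)) := by
      have h1 := Finset.sum_le_card_nsmul (Finset.range K) nn
        (Pc.eval ((Fp t).eval (max (LvS Γ V 1 (σ 0)) M)))
        (fun j hj => hnn j (Finset.mem_range.mp hj))
      simpa [Finset.card_range, smul_eq_mul] using h1
    have hKQ : K + 1 ≤ Q.eval (max (LvS Γ V 1 (σ 0)) M) :=
      hK _ (le_trans (LvS_anti Γ V h1t _) (le_max_left _ _))
    simp only [Polynomial.eval_add, Polynomial.eval_mul, Polynomial.eval_comp,
      Polynomial.eval_X, Polynomial.eval_C]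
    have h6 : (K+1) * (sizeE e + 1) ≤ (sizeE e + 1) * Q.eval (max (LvS Γ V 1 (σ 0)) M) := by
      rw [Nat.mul_comm]
      exact Nat.mul_le_mul_left _ hKQ
    have h7 : K * Pc.eval ((Fp t).eval (max (LvS Γ V 1 (σ 0)) M)) ≤
        Q.eval (max (LvS Γ V 1 (σ 0)) M) *
          Pc.eval ((Fp t).eval (max (LvS Γ V 1 (σ 0)) M)) :=
      Nat.mul_le_mul_right _ (by omega)
    omega
  · -- stable
    intro s hs his
    have h1 := hSt s hs K (le_refl K)
    simp only [Polynomial.eval_add, Polynomial.eval_mul, Polynomial.eval_comp,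
      Polynomial.eval_X, Polynomial.eval_C]
    omega
  · -- growth
    intro s hs1
    by_cases hts : t ≤ s
    · have h1 := hSt s hts K (le_refl K)
      have h2 := le_max_left (LvS Γ V s (σ 0)) M
      simp only [Polynomial.eval_add, Polynomial.eval_mul, Polynomial.eval_comp,
        Polynomial.eval_X, Polynomial.eval_C]
      omega
    · have hB := fun j hj => hBnd (t - s - 1) (s+1) (by omega) (by omega) j hj
      have h2 := hClaim2 (t - s - 1) s hs1 hB K (le_refl K)
      have hKQ : K + 1 ≤ Q.eval (max (LvS Γ V (s+1) (σ 0)) M) := by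
        apply hK
        exact le_trans (LvS_anti Γ V (by omega) _) (le_max_left _ _)
      have hje : K * Pc.eval ((Fp (t - s - 1)).eval (max (LvS Γ V (s+1) (σ 0)) M)) ≤
          Q.eval (max (LvS Γ V (s+1) (σ 0)) M) *
            Pc.eval ((Fp (t - s - 1)).eval (max (LvS Γ V (s+1) (σ 0)) M)) :=
        Nat.mul_le_mul_right _ (by omega)
      have hterm : Q.eval (max (LvS Γ V (s+1) (σ 0)) M) *
            Pc.eval ((Fp (t - s - 1)).eval (max (LvS Γ V (s+1) (σ 0)) M)) ≤
          Polynomial.eval (max (LvS Γ V (s+1) (σ 0)) M)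
            (∑ k ∈ Finset.range (t + 1), Q * (Pc.comp (Fp k))) := by
        rw [Polynomial.eval_finset_sum]
        have h3 := Finset.single_le_sum
          (f := fun k => (Q * (Pc.comp (Fp k))).eval (max (LvS Γ V (s+1) (σ 0)) M))
          (fun k _ => Nat.zero_le _) (Finset.mem_range.mpr (show t - s - 1 < t + 1 by omega))
        simpa [Polynomial.eval_mul, Polynomial.eval_comp] using h3
      simp only [Polynomial.eval_add, Polynomial.eval_mul, Polynomial.eval_comp,
        Polynomial.eval_X, Polynomial.eval_C]
      omega

theorem main_bound (hΔ : SafeDelta S Δ) :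
    ∀ {c : Cmd S} {t i o : ℕ}, TC S Γ Δ c t i o → (∀ x ∈ varsC c, x ∈ V) →
    ∃ P : Polynomial ℕ, SpecP Γ V P c t i := by
  intro c t i o h
  induction h with
  | @sub c t tin tout h ih =>
    intro hV
    obtain ⟨P, hP⟩ := ih hV
    refine ⟨P, fun φ μ μ' n q hev => ?_⟩
    obtain ⟨h1, h2, h3⟩ := hP φ μ μ' n q hev
    exact ⟨h1, fun s hs his => h2 s (by omega) his, h3⟩
  | @skip tin tout =>
    intro hV
    refine ⟨Polynomial.C 1, fun φ μ μ' n q hev => ?_⟩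
    cases hev
    refine ⟨by simp, fun s _ _ => le_max_left _ _, fun s _ => ?_⟩
    exact le_trans (le_max_left _ _) (Nat.le_add_right _ _)
  | @assign x e t' tin tout he hxe =>
    intro hV
    have hVe : ∀ y ∈ varsE e, y ∈ V := fun y hy => hV y
      (by rw [varsC]; exact Finset.mem_insert_of_mem hy)
    obtain ⟨C0, hC0⟩ := evalE_len Γ V hΔ he hVe
    set SB : ℕ := maxList ((([true] : W) :: ([false] : W) :: seedE e).map List.length) with hSBdef
    refine ⟨Polynomial.C (sizeE e + 1 + C0 + SB), fun φ μ μ' n q hev => ?_⟩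
    cases hev
    refine ⟨by simp only [Polynomial.eval_C]; omega, ?_, ?_⟩
    · intro s hs his
      rcases Nat.lt_or_ge (Γ x) s with hlt | hge
      · rw [LvS_update_low Γ V hlt]
        exact le_max_left _ _
      · obtain ⟨u, hu, hinf⟩ := evalE_infix Γ hΔ he (s := s) (φ := φ) (μ := μ) (by omega) his
        have hulen : u.length ≤ max (LvS Γ V s μ) SB := by
          rcases hu with h | h | h | ⟨y, hy, h2, h3⟩
          · subst h
            refine le_trans ?_ (le_max_right _ _)
            rw [hSBdef]
            exact BFF_le_maxList (List.mem_map_of_mem (List.mem_cons_self))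
          · subst h
            refine le_trans ?_ (le_max_right _ _)
            rw [hSBdef]
            exact BFF_le_maxList (List.mem_map_of_mem
              (List.mem_cons_of_mem _ (List.mem_cons_self)))
          · refine le_trans ?_ (le_max_right _ _)
            rw [hSBdef]
            exact BFF_le_maxList (List.mem_map_of_mem
              (List.mem_cons_of_mem _ (List.mem_cons_of_mem _ h)))
          · subst h3
            exact le_trans (len_le_LvS Γ V (hVe y hy) h2) (le_max_left _ _)
        have hval := hinf.length_le
        have h5 := LvS_update_le Γ V (s := s) (μ := μ) (x := x) (v := evalE S φ μ e)
        simp only [Polynomial.eval_C]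
        omega
    · intro s hs1
      rcases Nat.lt_or_ge (Γ x) s with hlt | hge
      · rw [LvS_update_low Γ V hlt]
        exact le_trans (le_max_left _ _) (Nat.le_add_right _ _)
      · have h1 := hC0 φ μ
        have h2 : LvS Γ V t' μ ≤ LvS Γ V s μ := LvS_anti Γ V (by omega) μ
        have h5 := LvS_update_le Γ V (s := s) (μ := μ) (x := x) (v := evalE S φ μ e)
        simp only [Polynomial.eval_C]
        omega
  | @seq c₁ c₂ t tin tout h₁ h₂ ih₁ ih₂ =>
    intro hV
    obtain ⟨P₁, hP₁⟩ := ih₁ (fun x hx => hV x (by rw [varsC]; exact Finset.mem_union_left _ hx))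
    obtain ⟨P₂, hP₂⟩ := ih₂ (fun x hx => hV x (by rw [varsC]; exact Finset.mem_union_right _ hx))
    refine ⟨P₁ + P₂.comp (Polynomial.X + P₁) + Polynomial.C 1, fun φ μ μ' n q hev => ?_⟩
    have evalP : ∀ y : ℕ, (P₁ + P₂.comp (Polynomial.X + P₁) + Polynomial.C 1).eval y
        = P₁.eval y + P₂.eval (y + P₁.eval y) + 1 := by
      intro y
      simp [Polynomial.eval_comp]
    cases hev with
    | @seq _ _ _ μ₁ _ n₁ n₂ q₁ q₂ g₁ g₂ =>
      set M : ℕ := maxList ((q₁ ++ q₂).map fun v => (φ v).length) with hMdef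
      have hq1 : maxList (q₁.map fun v => (φ v).length) ≤ M := by
        rw [hMdef]
        exact BFF_maxList_sublist ((List.sublist_append_left q₁ q₂).map _)
      have hq2 : maxList (q₂.map fun v => (φ v).length) ≤ M := by
        rw [hMdef]
        exact BFF_maxList_sublist ((List.sublist_append_right q₁ q₂).map _)
      obtain ⟨a1, b1, c1⟩ := hP₁ φ μ μ₁ n₁ q₁ g₁
      obtain ⟨a2, b2, c2⟩ := hP₂ φ μ₁ μ' n₂ q₂ g₂
      refine ⟨?_, ?_, ?_⟩
      · rw [evalP]
        have hL2 : LvS Γ V (1+1) μ ≤ LvS Γ V 1 μ := LvS_anti Γ V (by omega) μ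
        have hc1 := c1 1 (le_refl 1)
        have m1 := BFF_eval_le P₁ (show max (LvS Γ V 1 μ) (maxList (q₁.map fun v => (φ v).length))
            ≤ max (LvS Γ V 1 μ) M by omega)
        have m2 := BFF_eval_le P₁ (show max (LvS Γ V (1+1) μ) (maxList (q₁.map fun v => (φ v).length))
            ≤ max (LvS Γ V 1 μ) M by omega)
        have m3 := BFF_eval_le P₂ (show max (LvS Γ V 1 μ₁) (maxList (q₂.map fun v => (φ v).length))
            ≤ max (LvS Γ V 1 μ) M + P₁.eval (max (LvS Γ V 1 μ) M) by omega)
        omega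
      · intro s hs his
        have hb1 := b1 s hs his
        have hb2 := b2 s hs his
        have m4 := BFF_eval_le P₂ (show (0:ℕ) ≤ 0 + P₁.eval 0 by omega)
        rw [evalP]
        omega
      · intro s hs1
        have hc2 := c2 s hs1
        have hc1 := c1 s hs1
        have hc1' := c1 (s+1) (by omega)
        have hanti : LvS Γ V (s+1+1) μ ≤ LvS Γ V (s+1) μ := LvS_anti Γ V (by omega) μ
        have m1 := BFF_eval_le P₁
          (show max (LvS Γ V (s+1) μ) (maxList (q₁.map fun v => (φ v).length))
            ≤ max (LvS Γ V (s+1) μ) M by omega)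
        have m2 := BFF_eval_le P₁
          (show max (LvS Γ V (s+1+1) μ) (maxList (q₁.map fun v => (φ v).length))
            ≤ max (LvS Γ V (s+1) μ) M by omega)
        have m3 := BFF_eval_le P₂
          (show max (LvS Γ V (s+1) μ₁) (maxList (q₂.map fun v => (φ v).length))
            ≤ max (LvS Γ V (s+1) μ) M + P₁.eval (max (LvS Γ V (s+1) μ) M) by omega)
        rw [evalP]
        omega
  | @ite e c₁ c₂ t tin tout he h₁ h₂ ih₁ ih₂ =>
    intro hV
    obtain ⟨P₁, hP₁⟩ := ih₁ (fun x hx => hV x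
      (by rw [varsC]; exact Finset.mem_union_left _ (Finset.mem_union_right _ hx)))
    obtain ⟨P₂, hP₂⟩ := ih₂ (fun x hx => hV x (by rw [varsC]; exact Finset.mem_union_right _ hx))
    refine ⟨Polynomial.C (sizeE e + 1) + P₁ + P₂, fun φ μ μ' n q hev => ?_⟩
    have evalP : ∀ y : ℕ, (Polynomial.C (sizeE e + 1) + P₁ + P₂).eval y
        = (sizeE e + 1) + P₁.eval y + P₂.eval y := by intro y; simp
    cases hev with
    | @ifT _ _ _ _ _ nb qb hg hb =>
      set M : ℕ := maxList ((queriesE S φ μ e ++ qb).map fun v => (φ v).length) with hMdef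
      have hqb : maxList (qb.map fun v => (φ v).length) ≤ M := by
        rw [hMdef]
        exact BFF_maxList_sublist ((List.sublist_append_right _ qb).map _)
      obtain ⟨a1, b1, c1⟩ := hP₁ φ μ μ' nb qb hb
      refine ⟨?_, ?_, ?_⟩
      · rw [evalP]
        have m1 := BFF_eval_le P₁
          (show max (LvS Γ V 1 μ) (maxList (qb.map fun v => (φ v).length))
            ≤ max (LvS Γ V 1 μ) M by omega)
        omega
      · intro s hs his
        have hb1 := b1 s hs his
        rw [evalP]
        omega
      · intro s hs1
        have hc1 := c1 s hs1
        have m1 := BFF_eval_le P₁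
          (show max (LvS Γ V (s+1) μ) (maxList (qb.map fun v => (φ v).length))
            ≤ max (LvS Γ V (s+1) μ) M by omega)
        rw [evalP]
        omega
    | @ifF _ _ _ _ _ nb qb hg hb =>
      set M : ℕ := maxList ((queriesE S φ μ e ++ qb).map fun v => (φ v).length) with hMdef
      have hqb : maxList (qb.map fun v => (φ v).length) ≤ M := by
        rw [hMdef]
        exact BFF_maxList_sublist ((List.sublist_append_right _ qb).map _)
      obtain ⟨a1, b1, c1⟩ := hP₂ φ μ μ' nb qb hb
      refine ⟨?_, ?_, ?_⟩
      · rw [evalP]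
        have m1 := BFF_eval_le P₂
          (show max (LvS Γ V 1 μ) (maxList (qb.map fun v => (φ v).length))
            ≤ max (LvS Γ V 1 μ) M by omega)
        omega
      · intro s hs his
        have hb1 := b1 s hs his
        rw [evalP]
        omega
      · intro s hs1
        have hc1 := c1 s hs1
        have m1 := BFF_eval_le P₂
          (show max (LvS Γ V (s+1) μ) (maxList (qb.map fun v => (φ v).length))
            ≤ max (LvS Γ V (s+1) μ) M by omega)
        rw [evalP]
        omega
  | @whW e c t tin tout he hcb h1 h2 ihc =>
    intro hV
    obtain ⟨Pc, hPc⟩ := ihc (fun x hx => hV x (by rw [varsC]; exact Finset.mem_union_right _ hx))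
    exact while_spec Γ V hΔ he hcb h1 (fun x hx => hV x (by rw [varsC]; exact hx)) hPc
  | @wh0 e c t tin he hcb h1 ihc =>
    intro hV
    obtain ⟨Pc, hPc⟩ := ihc (fun x hx => hV x (by rw [varsC]; exact Finset.mem_union_right _ hx))
    exact while_spec Γ V hΔ he hcb h1 (fun x hx => hV x (by rw [varsC]; exact hx)) hPc

end MainInduction

/-- **Polynomial time property of safe programs.** If `p` is a safe program with
respect to `Γ` and a safe `Δ`, then there is a (type-1) polynomial `P` such that
for every store `μ`, every oracle `φ`, and every derivation `π : μ ⊨ p → w`, the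
size of the derivation is at most `P(m(μ,π))`, where `m(μ,π)` is the maximum of
`|μ|` and of the sizes of all oracle answers occurring in `π`. -/
theorem polynomial_step_count_of_safe (S : Sig) (Γ : ℕ → ℕ) (Δ : OpEnv S)
    (p : Prog S) (hp : SafeProg S Γ Δ p) :
    ∃ P : Polynomial ℕ, ∀ (φ : W → W) (μ μ' : ℕ → W) (n : ℕ) (q : List W),
      EvalC S φ p.cmd μ μ' n q → n ≤ P.eval (mval p φ μ q) := by
  obtain ⟨hΔ, t, tin, tout, hT⟩ := hp
  obtain ⟨P, hP⟩ := main_bound Γ p.vars hΔ hT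
    (fun x hx => Finset.mem_union_left _ hx)
  refine ⟨P, fun φ μ μ' n q hev => ?_⟩
  obtain ⟨h1, -, -⟩ := hP φ μ μ' n q hev
  refine le_trans h1 (BFF_poly_mono P ?_)
  have h2 : LvS Γ p.vars 1 μ ≤ storeSize p μ := by
    apply Finset.sup_le
    intro x hx
    exact Finset.single_le_sum (f := fun x => (μ x).length) (fun _ _ => Nat.zero_le _)
      ((Finset.mem_filter.mp hx).1)
  have h3 : mval p φ μ q
      = max (storeSize p μ) (maxList (q.map fun v => (φ v).length)) := rfl
  omega

end BFFpaper
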